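/- arXiv:1411.4855 — 6 statements merged into one kernel-verified Lean document; each statement's English description precedes it below -/
import Mathlib

section
/- If C is a σ-sparse Cantor subset of ℝ and φ is a C¹ diffeomorphism of ℝ preserving C with φ(a) = a for some a ∈ C, and φ is 1-flat at a (i.e. φ(x) − x = o(x − a) as x → a), then the restriction of φ to C is the identity in some neighborhood of a. -/
open Set Filter Topology Asymptotics

/-- A Cantor subset of the reals: nonempty, compact, perfect, totally disconnected. -/
def IsCantorSet (C : Set ℝ) : Prop :=
  C.Nonempty ∧ IsCompact C ∧ Perfect C ∧ IsTotallyDisconnected C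

/-- `C` is `σ`-sparse: any two points of `C` bound a complementary open interval of
relative length at least `σ`. -/
def SparseSet (σ : ℝ) (C : Set ℝ) : Prop :=
  ∀ a ∈ C, ∀ b ∈ C, a < b →
    ∃ α β : ℝ, a ≤ α ∧ α < β ∧ β ≤ b ∧ Set.Ioo α β ∩ C = ∅ ∧ σ * (b - a) ≤ β - α

/-- `φ` is a `C¹` diffeomorphism of `ℝ` with inverse `ψ`. -/
def IsC1DiffeoPair (φ ψ : ℝ → ℝ) : Prop :=
  ContDiff ℝ 1 φ ∧ ContDiff ℝ 1 ψ ∧ Function.LeftInverse ψ φ ∧ Function.RightInverse ψ φ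


/-!
Since `φ` is `C¹` with `φ'(a) = 1`, for any `K < σ` the map `φ - id` is `K`-Lipschitz near `a`.
Let `x ∈ C` lie in that neighbourhood to the right of `a` and let `p` be the largest fixed point
of `φ` in `C ∩ [a, x]`. If `p < x`, sparseness gives a gap `(g₁, g₂)` of `C` inside `[p, x]` with
`g₂ ∈ C` and length at least `σ (x - p)`, while `φ` moves each point of `[p, x]` by at most
`K (x - p)`. An increasing bijection of `C` that moves both ends of such a gap by less than its
length must fix `g₂`, contradicting the choice of `p`. The left side follows by conjugating `φ`
with `t ↦ -t`.
-/

open scoped Pointwise NNReal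

variable {σ : ℝ} {C : Set ℝ}

theorem SparseSet.neg (hsp : SparseSet σ C) : SparseSet σ (-C) := by
  intro a ha b hb hab
  obtain ⟨α, β, hbα, hαβ, hβa, hgap, hlen⟩ := hsp (-b) hb (-a) ha (neg_lt_neg hab)
  refine ⟨-β, -α, by linarith, by linarith, by linarith, ?_, by linarith⟩
  refine eq_empty_of_forall_notMem fun t ⟨⟨hβt, htα⟩, ht⟩ => ?_
  exact hgap.subset ⟨⟨lt_neg_of_lt_neg htα, neg_lt.1 hβt⟩, ht⟩

theorem SparseSet.exists_gap_right_mem (hsp : SparseSet σ C) (hC : IsClosed C) {p x : ℝ}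
    (hp : p ∈ C) (hx : x ∈ C) (hpx : p < x) :
    ∃ g₁ g₂, p ≤ g₁ ∧ g₁ < g₂ ∧ g₂ ≤ x ∧ g₂ ∈ C ∧ Ioo g₁ g₂ ∩ C = ∅ ∧
      σ * (x - p) ≤ g₂ - g₁ := by
  obtain ⟨α, β, hpα, hαβ, hβx, hgap, hlen⟩ := hsp p hp x hx hpx
  have hT : BddBelow (C ∩ Icc β x) := bddBelow_Icc.mono inter_subset_right
  obtain ⟨hgC, hβg, hgx⟩ :=
    (hC.inter isClosed_Icc).csInf_mem ⟨x, hx, hβx, le_rfl⟩ hT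
  refine ⟨α, sInf (C ∩ Icc β x), hpα, hαβ.trans_le hβg, hgx, hgC, ?_, by linarith⟩
  refine eq_empty_of_forall_notMem fun c ⟨⟨hαc, hcg⟩, hc⟩ => ?_
  rcases lt_or_ge c β with hcβ | hβc
  · exact hgap.subset ⟨⟨hαc, hcβ⟩, hc⟩
  · exact (csInf_le hT ⟨hc, hβc, (hcg.trans_le hgx).le⟩).not_gt hcg

theorem Monotone.apply_eq_self_of_gap {φ : ℝ → ℝ} (hmono : Monotone φ) (hmaps : MapsTo φ C C)
    (hsurj : SurjOn φ C C) {g₁ g₂ : ℝ} (hg₂ : g₂ ∈ C) (hgap : Ioo g₁ g₂ ∩ C = ∅)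
    (h₁ : |φ g₁ - g₁| < g₂ - g₁) (h₂ : |φ g₂ - g₂| < g₂ - g₁) : φ g₂ = g₂ := by
  have hC : ∀ c ∈ C, c ∉ Ioo g₁ g₂ := fun c hc hc' => hgap.subset ⟨hc', hc⟩
  obtain ⟨u, hu, hφu⟩ := hsurj hg₂
  have hg₂u : g₂ ≤ u := by
    by_contra! hug₂
    have hug₁ : u ≤ g₁ := not_lt.1 fun h => hC u hu ⟨h, hug₂⟩
    linarith [hmono hug₁, (abs_lt.1 h₁).2]
  refine le_antisymm ((hmono hg₂u).trans_eq hφu) (not_lt.1 fun h => hC _ (hmaps hg₂) ⟨?_, h⟩)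
  linarith [(abs_lt.1 h₂).1]

theorem SparseSet.eqOn_id_Icc_of_fixed_left (hsp : SparseSet σ C) (hC : IsClosed C)
    {K : ℝ≥0} (hK : (K : ℝ) < σ) {φ : ℝ → ℝ} (hmono : Monotone φ) (hmaps : MapsTo φ C C)
    (hsurj : SurjOn φ C C) {a b : ℝ} (ha : a ∈ C) (hfix : φ a = a)
    (hlip : LipschitzOnWith K (fun t => φ t - t) (Icc a b)) : EqOn φ id (C ∩ Icc a b) := by
  rintro x ⟨hx, hax, hxb⟩
  have hlip' : LipschitzOnWith K (fun t => φ t - t) (Icc a x) :=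
    hlip.mono (Icc_subset_Icc_right hxb)
  set S := Icc a x ∩ (fun t => φ t - t) ⁻¹' {0} ∩ C
  have hS : IsClosed S :=
    (hlip'.continuousOn.preimage_isClosed_of_isClosed isClosed_Icc isClosed_singleton).inter hC
  have hSbdd : BddAbove S := bddAbove_Icc.mono fun t ht => ht.1.1
  obtain ⟨⟨⟨hap, hpx⟩, hpfix⟩, hp⟩ :=
    hS.csSup_mem ⟨a, ⟨left_mem_Icc.2 hax, sub_eq_zero.2 hfix⟩, ha⟩ hSbdd
  set p := sSup S
  replace hpfix : φ p = p := sub_eq_zero.1 hpfix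
  rcases hpx.eq_or_lt with hpx | hpx
  · exact hpx ▸ hpfix
  obtain ⟨g₁, g₂, hpg₁, hg₁g₂, hg₂x, hg₂, hgap, hlen⟩ := hsp.exists_gap_right_mem hC hp hx hpx
  have hmove : ∀ q ∈ Icc p x, |φ q - q| < g₂ - g₁ := by
    rintro q ⟨hpq, hqx⟩
    calc |φ q - q| = dist (φ q - q) (φ p - p) := by rw [hpfix, sub_self, Real.dist_eq, sub_zero]
      _ ≤ K * dist q p := hlip'.dist_le_mul q ⟨hap.trans hpq, hqx⟩ p ⟨hap, hpx.le⟩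
      _ ≤ K * (x - p) := by rw [Real.dist_eq, abs_of_nonneg (by linarith)]; gcongr
      _ < σ * (x - p) := by gcongr
      _ ≤ g₂ - g₁ := hlen
  have hfix₂ := hmono.apply_eq_self_of_gap hmaps hsurj hg₂ hgap
    (hmove g₁ ⟨hpg₁, by linarith⟩) (hmove g₂ ⟨by linarith, hg₂x⟩)
  have : g₂ ≤ p := le_csSup hSbdd ⟨⟨⟨by linarith, hg₂x⟩, sub_eq_zero.2 hfix₂⟩, hg₂⟩
  linarith

theorem SparseSet.eqOn_id_Icc_of_fixed_right (hsp : SparseSet σ C) (hC : IsClosed C)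
    {K : ℝ≥0} (hK : (K : ℝ) < σ) {φ : ℝ → ℝ} (hmono : Monotone φ) (hmaps : MapsTo φ C C)
    (hsurj : SurjOn φ C C) {a b : ℝ} (ha : a ∈ C) (hfix : φ a = a)
    (hlip : LipschitzOnWith K (fun t => φ t - t) (Icc b a)) : EqOn φ id (C ∩ Icc b a) := by
  have hlip' : LipschitzOnWith K (fun t => -φ (-t) - t) (Icc (-a) (-b)) := by
    refine lipschitzOnWith_iff_dist_le_mul.2 fun s hs t ht => ?_
    have h := hlip.dist_le_mul (-s) ⟨by linarith [hs.2], by linarith [hs.1]⟩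
      (-t) ⟨by linarith [ht.2], by linarith [ht.1]⟩
    rw [← dist_neg_neg, dist_neg_neg s] at h
    convert h using 2 <;> ring
  have hmirror := hsp.neg.eqOn_id_Icc_of_fixed_left (hC.preimage continuous_neg) hK
    (φ := fun t => -φ (-t)) (fun s t h => neg_le_neg (hmono (neg_le_neg h)))
    (fun t ht => by simpa using hmaps ht)
    (fun t ht => by
      obtain ⟨u, hu, hφu⟩ := hsurj ht
      exact ⟨-u, by simpa using hu, by simp [hφu]⟩)
    (by simpa using ha) (by simp [hfix]) hlip'
  rintro x ⟨hx, hbx, hxa⟩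
  simpa using hmirror ⟨show -x ∈ -C by simpa using hx, neg_le_neg hxa, neg_le_neg hbx⟩

theorem Continuous.strictMono_of_injective_of_hasDerivAt_pos {f : ℝ → ℝ} {f' a : ℝ}
    (hf : Continuous f) (hinj : Function.Injective f) (hd : HasDerivAt f f' a) (hf' : 0 < f') :
    StrictMono f :=
  (hf.strictMono_of_inj hinj).resolve_right fun hanti =>
    hf'.not_ge (hd.deriv ▸ hanti.antitone.deriv_nonpos)

theorem flat_diffeo_eq_id_near_general (σ : ℝ) (hσ : 0 < σ) (C : Set ℝ)
    (hC : IsCantorSet C) (hsp : SparseSet σ C)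
    (φ ψ : ℝ → ℝ) (hφ : IsC1DiffeoPair φ ψ) (hpres : φ '' C = C)
    (a : ℝ) (ha : a ∈ C)
    (hflat : (fun x => φ x - x) =o[𝓝 a] fun x => x - a) :
    ∃ ε > 0, ∀ x ∈ C, |x - a| < ε → φ x = x := by
  obtain ⟨hφ, -, hψφ, -⟩ := hφ
  have hfix : φ a = a := sub_eq_zero.1 <| hflat.isBigO.eq_zero_imp.self_of_nhds (sub_self a)
  have hderiv : HasDerivAt φ 1 a :=
    hasDerivAt_iff_isLittleO.2 <| by simpa [hfix, sub_sub, add_sub_cancel] using hflat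
  have hmono : Monotone φ :=
    (hφ.continuous.strictMono_of_injective_of_hasDerivAt_pos hψφ.injective hderiv one_pos).monotone
  obtain ⟨K, hK0, hKσ⟩ := exists_between (Real.toNNReal_pos.2 hσ)
  have hstrict : HasStrictDerivAt (fun t => φ t - t) (1 - 1) a :=
    (hφ.contDiffAt.hasStrictDerivAt' hderiv one_ne_zero).sub (hasStrictDerivAt_id a)
  obtain ⟨s, hs, hlip⟩ :=
    hstrict.hasStrictFDerivAt.exists_lipschitzOnWith_of_nnnorm_lt K (by simpa using hK0)
  obtain ⟨δ, hδ, hδs⟩ := Metric.nhds_basis_closedBall.mem_iff.1 hs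
  rw [Real.closedBall_eq_Icc] at hδs
  have hmaps : MapsTo φ C C := mapsTo_iff_image_subset.2 hpres.subset
  have hsurj : SurjOn φ C C := hpres.symm.subset
  have hCcl : IsClosed C := hC.2.1.isClosed
  have hKσ' : (K : ℝ) < σ := Real.lt_toNNReal_iff_coe_lt.1 hKσ
  refine ⟨δ, hδ, fun x hx hdist => ?_⟩
  obtain ⟨hxa₁, hxa₂⟩ := abs_lt.1 hdist
  rcases le_total a x with hax | hxa
  · exact hsp.eqOn_id_Icc_of_fixed_left hCcl hKσ' hmono hmaps hsurj ha hfix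
      (hlip.mono ((Icc_subset_Icc_left (by linarith)).trans hδs)) ⟨hx, hax, by linarith⟩
  · exact hsp.eqOn_id_Icc_of_fixed_right hCcl hKσ' hmono hmaps hsurj ha hfix
      (hlip.mono ((Icc_subset_Icc_right (by linarith)).trans hδs)) ⟨hx, by linarith, hxa⟩

/-- If `C` is a σ-sparse Cantor set, `φ` a `C¹` diffeomorphism of ℝ preserving `C`
fixing `a ∈ C` and 1-flat at `a`, then `φ` is the identity on `C` near `a`. -/
theorem flat_diffeo_eq_id_near (σ : ℝ) (hσ : 0 < σ) (C : Set ℝ)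
    (hC : IsCantorSet C) (hsp : SparseSet σ C)
    (φ ψ : ℝ → ℝ) (hφ : IsC1DiffeoPair φ ψ) (hpres : φ '' C = C)
    (a : ℝ) (ha : a ∈ C) (hfix : φ a = a)
    (hflat : (fun x => φ x - x) =o[𝓝 a] fun x => x - a) :
    ∃ ε > 0, ∀ x ∈ C, |x - a| < ε → φ x = x :=
  flat_diffeo_eq_id_near_general σ hσ C hC hsp φ ψ hφ hpres a ha hflat
end

section
/- If C is a σ-sparse Cantor subset of ℝ and φ is a C¹ diffeomorphism of ℝ preserving C with φ(a) = a for some a ∈ C, and φ is not 1-flat at a, then |φ'(a) − 1| ≥ σ. -/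
open Set Filter Topology Asymptotics

/-!
Suppose `a ∈ C` is fixed by `f` and `1 - σ < f'(a) < 1`. Then every `x ≠ a` close to `a` is
moved towards `a`, but by less than `σ |x - a|`. Between `a` and a nearby point of `C`,
sparseness provides a gap of `C` with endpoints in `C` of length at least `σ` times the
distance from `a` to its far endpoint `x`; then `f x` falls into that gap, contradicting
`f x ∈ C`. Hence `f'(a) ∉ (1 - σ, 1)`. This settles `φ'(a) < 1`, and `φ'(a) > 1` follows by
applying it to `ψ`, whose derivative at `a` is `φ'(a)⁻¹`.
-/

namespace SparseSet

variable {σ : ℝ} {C : Set ℝ}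

theorem exists_gap (hsp : SparseSet σ C) (hC : IsClosed C) {a b : ℝ} (ha : a ∈ C)
    (hb : b ∈ C) (hab : a < b) :
    ∃ c ∈ C, ∃ d ∈ C, a ≤ c ∧ c < d ∧ d ≤ b ∧ Disjoint (Ioo c d) C ∧
      σ * (b - a) ≤ d - c := by
  obtain ⟨α, β, haα, hαβ, hβb, hαβC, hlen⟩ := hsp a ha b hb hab
  have hL : IsCompact (C ∩ Icc a α) := isCompact_Icc.inter_left hC
  have hR : IsCompact (C ∩ Icc β b) := isCompact_Icc.inter_left hC
  obtain ⟨hcC, hac, hcα⟩ := hL.sSup_mem ⟨a, ha, le_rfl, haα⟩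
  obtain ⟨hdC, hβd, hdb⟩ := hR.sInf_mem ⟨b, hb, hβb, le_rfl⟩
  refine ⟨_, hcC, _, hdC, hac, by linarith, hdb, ?_, by linarith⟩
  refine Set.disjoint_left.2 fun x ⟨hcx, hxd⟩ hx => ?_
  rcases le_or_gt x α with hxα | hαx
  · exact hcx.not_ge (le_csSup hL.bddAbove ⟨hx, by linarith, hxα⟩)
  rcases le_or_gt β x with hβx | hxβ
  · exact hxd.not_ge (csInf_le hR.bddBelow ⟨hx, hβx, by linarith⟩)
  · exact (Set.eq_empty_iff_forall_notMem.1 hαβC) x ⟨⟨hαx, hxβ⟩, hx⟩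

variable {f : ℝ → ℝ} {a : ℝ}

theorem not_eventually_slope_mem_Ioo (hsp : SparseSet σ C) (hC : IsClosed C) (hσ : 0 ≤ σ)
    (hf : MapsTo f C C) (ha : a ∈ C) (hacc : AccPt a (𝓟 C)) (hfix : f a = a) :
    ¬ ∀ᶠ x in 𝓝[≠] a, slope f a x ∈ Ioo (1 - σ) 1 := by
  intro h
  obtain ⟨u, hu, hus⟩ := mem_nhdsWithin_iff_exists_mem_nhds_inter.1 h
  obtain ⟨l, r, hlr, hlru⟩ := mem_nhds_iff_exists_Ioo_subset.1 hu
  obtain ⟨b, ⟨hblr, hb⟩, hba⟩ := accPt_iff_nhds.1 hacc _ (isOpen_Ioo.mem_nhds hlr)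
  have hslope : ∀ x ∈ Ioo l r, x ≠ a → f x - a = (x - a) * slope f a x ∧
      slope f a x ∈ Ioo (1 - σ) 1 := fun x hx hxa =>
    ⟨by rw [← smul_eq_mul, sub_smul_slope, vsub_eq_sub, hfix], hus ⟨hlru hx, hxa⟩⟩
  rcases hba.lt_or_gt with hba | hab
  · obtain ⟨c, hc, d, -, hbc, hcd, hda, hgap, hlen⟩ := hsp.exists_gap hC hb ha hba
    obtain ⟨hfc, ht₀, ht₁⟩ :=
      hslope c ⟨by linarith [hblr.1], by linarith [hlr.2]⟩ (hcd.trans_le hda).ne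
    refine hgap.notMem_of_mem_right (hf hc) ⟨?_, ?_⟩
    · nlinarith
    · nlinarith [mul_nonneg hσ (sub_nonneg.2 hbc)]
  · obtain ⟨c, -, d, hd, hac, hcd, hdb, hgap, hlen⟩ := hsp.exists_gap hC ha hb hab
    obtain ⟨hfd, ht₀, ht₁⟩ :=
      hslope d ⟨by linarith [hlr.1], by linarith [hblr.2]⟩ (hac.trans_lt hcd).ne'
    refine hgap.notMem_of_mem_right (hf hd) ⟨?_, ?_⟩
    · nlinarith [mul_nonneg hσ (sub_nonneg.2 hdb)]
    · nlinarith

theorem hasDerivAt_notMem_Ioo (hsp : SparseSet σ C) (hC : IsClosed C) (hσ : 0 ≤ σ)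
    (hf : MapsTo f C C) (ha : a ∈ C) (hacc : AccPt a (𝓟 C)) (hfix : f a = a) {μ : ℝ}
    (hder : HasDerivAt f μ a) : μ ∉ Ioo (1 - σ) 1 := fun hμ =>
  hsp.not_eventually_slope_mem_Ioo hC hσ hf ha hacc hfix <|
    hasDerivAt_iff_tendsto_slope.1 hder (Ioo_mem_nhds hμ.1 hμ.2)

end SparseSet

/-- If `φ` is a `C¹` diffeomorphism of ℝ preserving a σ-sparse Cantor set `C`,
fixing `a ∈ C`, and not 1-flat at `a`, then `|φ'(a) - 1| ≥ σ`. -/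
theorem nonflat_deriv_far_from_one (σ : ℝ) (hσ : 0 < σ) (C : Set ℝ)
    (hC : IsCantorSet C) (hsp : SparseSet σ C)
    (φ ψ : ℝ → ℝ) (hφ : IsC1DiffeoPair φ ψ) (hpres : φ '' C = C)
    (a : ℝ) (ha : a ∈ C) (hfix : φ a = a)
    (hnonflat : ¬ ((fun x => φ x - x) =o[𝓝 a] fun x => x - a)) :
    σ ≤ |deriv φ a - 1| := by
  obtain ⟨-, hcpt, hperf, -⟩ := hC
  obtain ⟨hφc, hψc, hleft, hright⟩ := hφ
  have key : ∀ {f : ℝ → ℝ} {μ : ℝ}, MapsTo f C C → f a = a → HasDerivAt f μ a →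
      μ ∉ Ioo (1 - σ) 1 := fun hf hfa hder =>
    hsp.hasDerivAt_notMem_Ioo hcpt.isClosed hσ.le hf ha (hperf.acc a ha) hfa hder
  have hφ' : HasDerivAt φ (deriv φ a) a := (hφc.differentiable one_ne_zero a).hasDerivAt
  have hφC : MapsTo φ C C := fun x hx => hpres ▸ mem_image_of_mem φ hx
  have hψC : MapsTo ψ C C := fun x hx => by
    obtain ⟨y, hy, rfl⟩ := hpres.symm ▸ hx
    rwa [hleft y]
  have hψa : ψ a = a := by simpa only [hfix] using hleft a
  rcases lt_trichotomy (deriv φ a) 1 with hlt | heq | hgt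
  · have := key hφC hfix hφ'
    rw [abs_of_neg (by linarith)]
    exact le_of_not_gt fun h => this ⟨by linarith, hlt⟩
  · refine absurd ((hasDerivAt_iff_isLittleO.1 hφ').congr_left fun x => ?_) hnonflat
    rw [heq, hfix, smul_eq_mul]
    ring
  · have hψ' : HasDerivAt ψ (deriv φ a)⁻¹ a :=
      .of_local_left_inverse hψc.continuous.continuousAt (hψa.symm ▸ hφ') (by positivity)
        (.of_forall hright)
    have hinv : (deriv φ a)⁻¹ ≤ 1 - σ :=
      le_of_not_gt fun h => key hψC hψa hψ' ⟨h, inv_lt_one_of_one_lt₀ hgt⟩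
    have := (inv_le_iff_one_le_mul₀' (by linarith)).1 hinv
    rw [abs_of_pos (by linarith)]
    nlinarith
end

section
/- Let C be a σ-sparse Cantor subset of ℝ and a ∈ C. For any orientation-preserving C¹ diffeomorphism φ of ℝ preserving C with φ(a) = a, either the restriction of φ to C is the identity in a neighborhood of a, or there exists ψ with ψ(a) = a such that in a small neighborhood of a the restriction of φ to C coincides with an iterate ψ^k (k ∈ ℤ \ {0}) of ψ, where ψ(x) = a + p(x − a) + o(x − a) with |p − 1| ≥ σ. Consequently the group of germs at a of orientation-preserving C¹ diffeomorphisms preserving C and fixing a, modulo those that are the identity on C near a, is either trivial or isomorphic to ℤ. -/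
open Set Filter Topology Asymptotics

/-!
Between `a` and a nearby point `y ∈ C`, sparseness gives a gap of `C` of length at least
`σ |y - a|`. An increasing map preserving `C` permutes the gaps of `C`, so it either fixes both
endpoints of this gap or moves one of them by at least the gap's length.

If `φ'(a) ≠ 1`, then `φ` fixes no point near `a` other than `a`, so the second alternative
occurs at gap endpoints arbitrarily close to `a`; this forces `|φ'(a) - 1| ≥ σ`, and `ψ = φ`,
`k = 1` will do. If `φ'(a) = 1`, the mean value theorem bounds the displacement near `a` by
`σ / 2` times the distance to a fixed point, which excludes the second alternative. So if some
`x ∈ C` near `a` were moved, the gap between `x` and the fixed point `m ∈ C` closest to `x`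
between `a` and `x` would have a fixed endpoint even closer to `x`.
-/

/-- `(u, v)` is a bounded connected component of `ℝ \ C`. -/
structure IsGap (C : Set ℝ) (u v : ℝ) : Prop where
  left_mem : u ∈ C
  right_mem : v ∈ C
  lt : u < v
  disjoint : Disjoint (Ioo u v) C

variable {σ : ℝ} {C : Set ℝ} {φ : ℝ → ℝ} {u v : ℝ}

namespace IsGap

theorem le_or_ge (h : IsGap C u v) {c : ℝ} (hc : c ∈ C) : c ≤ u ∨ v ≤ c := by
  by_contra! hcuv
  exact h.disjoint.notMem_of_mem_left hcuv hc

theorem image (h : IsGap C u v) (hmono : StrictMono φ) (himage : φ '' C = C) :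
    IsGap C (φ u) (φ v) := by
  refine ⟨himage ▸ mem_image_of_mem φ h.left_mem, himage ▸ mem_image_of_mem φ h.right_mem,
    hmono h.lt, disjoint_left.mpr ?_⟩
  rintro _ ⟨hu, hv⟩ hc
  rw [← himage] at hc
  obtain ⟨c, hcC, rfl⟩ := hc
  exact h.disjoint.notMem_of_mem_left ⟨hmono.lt_iff_lt.mp hu, hmono.lt_iff_lt.mp hv⟩ hcC

theorem fixed_or_le_abs_sub (h : IsGap C u v) (hφ : IsGap C (φ u) (φ v)) :
    (φ u = u ∧ φ v = v) ∨ v - u ≤ |φ u - u| ∨ v - u ≤ |φ v - v| := by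
  rcases lt_trichotomy (φ u) u with hlt | heq | hgt
  · have : φ v ≤ u := (hφ.le_or_ge h.left_mem).resolve_left hlt.not_ge
    exact Or.inr (Or.inr (le_abs.mpr (Or.inr (by linarith))))
  · have h₁ := (h.le_or_ge hφ.right_mem).resolve_left (by linarith [hφ.lt])
    have h₂ := (hφ.le_or_ge h.right_mem).resolve_left (by linarith [h.lt])
    exact Or.inl ⟨heq, le_antisymm h₂ h₁⟩
  · have : v ≤ φ u := (h.le_or_ge hφ.left_mem).resolve_left hgt.not_ge
    exact Or.inr (Or.inl (le_abs.mpr (Or.inl (by linarith))))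

end IsGap

theorem SparseSet.exists_isGap (hsp : SparseSet σ C) (hC : IsClosed C) {x y : ℝ}
    (hx : x ∈ C) (hy : y ∈ C) (hxy : x < y) :
    ∃ u v, IsGap C u v ∧ x ≤ u ∧ v ≤ y ∧ σ * (y - x) ≤ v - u := by
  obtain ⟨α, β, hxα, hαβ, hβy, hgap, hlen⟩ := hsp x hx y hy hxy
  have hne₁ : (C ∩ Icc x α).Nonempty := ⟨x, hx, le_rfl, hxα⟩
  have hne₂ : (C ∩ Icc β y).Nonempty := ⟨y, hy, hβy, le_rfl⟩
  have hbdd₁ : BddAbove (C ∩ Icc x α) := bddAbove_Icc.mono inter_subset_right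
  have hbdd₂ : BddBelow (C ∩ Icc β y) := bddBelow_Icc.mono inter_subset_right
  have hu := (hC.inter isClosed_Icc).csSup_mem hne₁ hbdd₁
  have hv := (hC.inter isClosed_Icc).csInf_mem hne₂ hbdd₂
  refine ⟨_, _, ⟨hu.1, hv.1, by linarith [hu.2.2, hv.2.1], disjoint_left.mpr ?_⟩,
    hu.2.1, hv.2.2, by linarith [hu.2.2, hv.2.1]⟩
  rintro c ⟨hc₁, hc₂⟩ hcC
  rcases le_or_gt c α with hcα | hαc
  · exact hc₁.not_ge (le_csSup hbdd₁ ⟨hcC, hu.2.1.trans hc₁.le, hcα⟩)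
  rcases le_or_gt β c with hβc | hcβ
  · exact hc₂.not_ge (csInf_le hbdd₂ ⟨hcC, hβc, hc₂.le.trans hv.2.2⟩)
  exact (Set.eq_empty_iff_forall_notMem.mp hgap) c ⟨⟨hαc, hcβ⟩, hcC⟩

theorem SparseSet.exists_isGap_uIcc (hsp : SparseSet σ C) (hC : IsClosed C) {x y : ℝ}
    (hx : x ∈ C) (hy : y ∈ C) (hxy : x ≠ y) :
    ∃ u v, IsGap C u v ∧ u ∈ uIcc x y ∧ v ∈ uIcc x y ∧ σ * |y - x| ≤ v - u := by
  rcases hxy.lt_or_gt with hlt | hgt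
  · obtain ⟨u, v, hg, hu, hv, hlen⟩ := hsp.exists_isGap hC hx hy hlt
    refine ⟨u, v, hg, ?_, ?_, by rwa [abs_of_pos (sub_pos.mpr hlt)]⟩ <;>
      rw [uIcc_of_le hlt.le] <;> constructor <;> linarith [hg.lt]
  · obtain ⟨u, v, hg, hu, hv, hlen⟩ := hsp.exists_isGap hC hy hx hgt
    refine ⟨u, v, hg, ?_, ?_, by rwa [abs_of_neg (sub_neg.mpr hgt), neg_sub]⟩ <;>
      rw [uIcc_of_ge hgt.le] <;> constructor <;> linarith [hg.lt]

theorem abs_sub_self_le_of_abs_deriv_sub_one_le (hφ : Differentiable ℝ φ) {s : Set ℝ}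
    (hs : Convex ℝ s) {ρ : ℝ} (hd : ∀ t ∈ s, |deriv φ t - 1| ≤ ρ) {m x : ℝ}
    (hm : m ∈ s) (hx : x ∈ s) (hfix : φ m = m) : |φ x - x| ≤ ρ * |x - m| := by
  have := hs.norm_image_sub_le_of_norm_hasDerivWithin_le (f := fun t => φ t - t)
    (fun t _ => ((hφ t).hasDerivAt.sub (hasDerivAt_id t)).hasDerivWithinAt) hd hm hx
  simpa [hfix] using this

theorem abs_sub_lt_abs_sub_of_mem_uIcc {m x e : ℝ} (he : e ∈ uIcc m x) (hem : e ≠ m) :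
    |x - e| < |x - m| := by
  rcases le_total m x with hmx | hxm
  · rw [uIcc_of_le hmx] at he
    rw [abs_of_nonneg (by linarith [he.2]), abs_of_nonneg (by linarith)]
    linarith [lt_of_le_of_ne he.1 hem.symm]
  · rw [uIcc_of_ge hxm] at he
    rw [abs_of_nonpos (by linarith [he.1]), abs_of_nonpos (by linarith)]
    linarith [lt_of_le_of_ne he.2 hem]

theorem SparseSet.eqOn_id_of_abs_deriv_sub_one_le (hsp : SparseSet σ C) (hσ : 0 < σ)
    (hC : IsClosed C) (hmono : StrictMono φ) (himage : φ '' C = C) (hφ : Differentiable ℝ φ)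
    {s : Set ℝ} (hs : Convex ℝ s) (hd : ∀ t ∈ s, |deriv φ t - 1| ≤ σ / 2) {a : ℝ}
    (ha : a ∈ C ∩ s) (hfix : φ a = a) : EqOn φ id (C ∩ s) := by
  intro x hx
  by_contra hne
  have hK : IsCompact (C ∩ uIcc a x ∩ {m | φ m = m}) :=
    (isCompact_uIcc.inter_left hC).inter_right (isClosed_eq hφ.continuous continuous_id)
  -- `m` is the fixed point of `φ` in `C` between `a` and `x` that is closest to `x`
  obtain ⟨m, ⟨⟨hmC, hm⟩, hmfix⟩, hmin⟩ :=
    hK.exists_isMinOn ⟨a, ⟨ha.1, left_mem_uIcc⟩, hfix⟩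
      (continuous_const.sub continuous_id).abs.continuousOn
  have hmx : m ≠ x := fun h => hne (h ▸ hmfix)
  have hsub : uIcc m x ⊆ s :=
    (uIcc_subset_uIcc_right hm).trans (hs.ordConnected.uIcc_subset ha.2 hx.2)
  obtain ⟨u, v, hg, hu, hv, hlen⟩ := hsp.exists_isGap_uIcc hC hmC hx.1 hmx
  have hmove : ∀ e ∈ uIcc m x, |φ e - e| < v - u := fun e he => calc
    |φ e - e| ≤ σ / 2 * |e - m| :=
      abs_sub_self_le_of_abs_deriv_sub_one_le hφ hs hd (hsub left_mem_uIcc) (hsub he) hmfix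
    _ ≤ σ / 2 * |x - m| :=
      mul_le_mul_of_nonneg_left (abs_sub_left_of_mem_uIcc he) (half_pos hσ).le
    _ < σ * |x - m| := by
      have := abs_pos.mpr (sub_ne_zero.mpr hmx.symm)
      nlinarith
    _ ≤ v - u := hlen
  obtain ⟨hu_fix, hv_fix⟩ : φ u = u ∧ φ v = v := by
    rcases hg.fixed_or_le_abs_sub (hg.image hmono himage) with h | h | h
    exacts [h, absurd h (hmove u hu).not_ge, absurd h (hmove v hv).not_ge]
  obtain ⟨e, heC, he, hefix, hem⟩ : ∃ e ∈ C, e ∈ uIcc m x ∧ φ e = e ∧ e ≠ m := by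
    by_cases hum : u = m
    · exact ⟨v, hg.right_mem, hv, hv_fix, hum ▸ hg.lt.ne'⟩
    · exact ⟨u, hg.left_mem, hu, hu_fix, hum⟩
  exact (abs_sub_lt_abs_sub_of_mem_uIcc he hem).not_ge
    (isMinOn_iff.mp hmin e ⟨⟨heC, uIcc_subset_uIcc_right hm he⟩, hefix⟩)

theorem HasDerivAt.eventually_ne_and_abs_sub_self_lt {a p ρ : ℝ} (hder : HasDerivAt φ p a)
    (hfix : φ a = a) (hp : p ≠ 1) (hρ : |p - 1| < ρ) :
    ∀ᶠ e in 𝓝[≠] a, φ e ≠ e ∧ |φ e - e| < ρ * |e - a| := by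
  have hslope : ∀ᶠ e in 𝓝[≠] a, slope φ a e - 1 ≠ 0 ∧ |slope φ a e - 1| < ρ :=
    ((hasDerivAt_iff_tendsto_slope.mp hder).sub_const 1).eventually
      ((isOpen_ne.inter (isOpen_lt continuous_abs continuous_const)).mem_nhds
        ⟨sub_ne_zero.mpr hp, hρ⟩)
  filter_upwards [hslope, self_mem_nhdsWithin] with e ⟨h₁, h₂⟩ (hea : e ≠ a)
  have hsl : slope φ a e - 1 = (φ e - e) / (e - a) := by
    rw [slope_def_field, hfix]
    field_simp [sub_ne_zero.mpr hea]
    ring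
  rw [hsl] at h₁ h₂
  rw [abs_div, div_lt_iff₀ (abs_pos.mpr (sub_ne_zero.mpr hea))] at h₂
  exact ⟨fun h => h₁ (by rw [h, sub_self, zero_div]), h₂⟩

theorem SparseSet.le_abs_sub_one_of_hasDerivAt (hsp : SparseSet σ C) (hC : IsClosed C)
    (hmono : StrictMono φ) (himage : φ '' C = C) {a p : ℝ} (ha : a ∈ C)
    (hacc : AccPt a (𝓟 C)) (hfix : φ a = a) (hder : HasDerivAt φ p a) (hp : p ≠ 1) :
    σ ≤ |p - 1| := by
  by_contra! hlt
  obtain ⟨ε, hε, hnear⟩ := Metric.eventually_nhds_iff.mp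
    (eventually_nhdsWithin_iff.mp (hder.eventually_ne_and_abs_sub_self_lt hfix hp hlt))
  obtain ⟨y, ⟨hya, hyC⟩, hyε⟩ :=
    ((accPt_iff_frequently.mp hacc).and_eventually (Metric.ball_mem_nhds a hε)).exists
  obtain ⟨u, v, hg, hu, hv, hlen⟩ := hsp.exists_isGap_uIcc hC ha hyC hya.symm
  have hsmall : ∀ e ∈ uIcc a y, e ≠ a → φ e ≠ e ∧ |φ e - e| < v - u := by
    intro e he hea
    have hea' := abs_sub_left_of_mem_uIcc he
    obtain ⟨h₁, h₂⟩ := hnear (by rw [Real.dist_eq]; exact hea'.trans_lt hyε) hea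
    refine ⟨h₁, h₂.trans_le ((mul_le_mul_of_nonneg_left hea' ?_).trans hlen)⟩
    exact (abs_nonneg _).trans hlt.le
  have hmove : ∀ e ∈ uIcc a y, |φ e - e| < v - u := fun e he => by
    by_cases hea : e = a
    · rw [hea, hfix, sub_self, abs_zero, sub_pos]
      exact hg.lt
    · exact (hsmall e he hea).2
  rcases hg.fixed_or_le_abs_sub (hg.image hmono himage) with ⟨hu_fix, hv_fix⟩ | h | h
  · by_cases hua : u = a
    · exact (hsmall v hv (hua ▸ hg.lt.ne')).1 hv_fix
    · exact (hsmall u hu hua).1 hu_fix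
  · exact (hmove u hu).not_ge h
  · exact (hmove v hv).not_ge h

/-- Dichotomy for point stabilizers: any orientation-preserving `C¹` diffeomorphism
preserving a σ-sparse Cantor set `C` and fixing `a ∈ C` is, on `C` near `a`, either
the identity or a nonzero power of a fixed generator `ψ` of the form
`ψ(x) = a + p(x-a) + o(x-a)` with `|p-1| ≥ σ`; hence the germ group is trivial or ℤ. -/
theorem stabilizer_germ_dichotomy (σ : ℝ) (hσ : 0 < σ) (C : Set ℝ)
    (hC : IsCantorSet C) (hsp : SparseSet σ C) (a : ℝ) (ha : a ∈ C)
    (φ φinv : ℝ → ℝ) (hφ : IsC1DiffeoPair φ φinv) (hmono : StrictMono φ)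
    (hpres : φ '' C = C) (hfix : φ a = a) :
    (∃ ε > 0, ∀ x ∈ C, |x - a| < ε → φ x = x) ∨
    (∃ ψ : Equiv.Perm ℝ, IsC1DiffeoPair ψ ψ.symm ∧ StrictMono ψ ∧
      (ψ : ℝ → ℝ) '' C = C ∧ ψ a = a ∧
      (∃ p : ℝ, σ ≤ |p - 1| ∧
        ((fun x => ψ x - (a + p * (x - a))) =o[𝓝 a] fun x => x - a)) ∧
      ∃ k : ℤ, k ≠ 0 ∧ ∃ ε > 0, ∀ x ∈ C, |x - a| < ε → φ x = (ψ ^ k) x) := by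
  have hclosed : IsClosed C := hC.2.2.1.closed
  have hdiff : Differentiable ℝ φ := hφ.1.differentiable one_ne_zero
  by_cases hp : deriv φ a = 1
  · left
    obtain ⟨ε, hε, hnear⟩ := Metric.continuousAt_iff.mp
      (hφ.1.continuous_deriv le_rfl).continuousAt (σ / 2) (half_pos hσ)
    have hd : ∀ t ∈ Metric.ball a ε, |deriv φ t - 1| ≤ σ / 2 := fun t ht => by
      simpa only [Real.dist_eq, hp] using (hnear ht).le
    refine ⟨ε, hε, fun x hx hxa => ?_⟩
    exact hsp.eqOn_id_of_abs_deriv_sub_one_le hσ hclosed hmono hpres hdiff (convex_ball a ε) hd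
      ⟨ha, Metric.mem_ball_self hε⟩ hfix ⟨hx, by rwa [Metric.mem_ball, Real.dist_eq]⟩
  · right
    refine ⟨⟨φ, φinv, hφ.2.2.1, hφ.2.2.2⟩, hφ, hmono, hpres, hfix, ⟨deriv φ a,
      hsp.le_abs_sub_one_of_hasDerivAt hclosed hmono hpres ha (hC.2.2.1.acc a ha) hfix
        (hdiff a).hasDerivAt hp, ?_⟩, 1, one_ne_zero, 1, one_pos, fun x _ _ => by simp⟩
    refine (hasDerivAt_iff_isLittleO.mp (hdiff a).hasDerivAt).congr_left fun x => ?_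
    simp only [hfix, smul_eq_mul, Equiv.coe_fn_mk]
    ring
end

section
/- If C is a sparse Cantor subset of the circle S¹ = ℝ/ℤ, then the group of homeomorphisms of C arising as restrictions to C of C¹ diffeomorphisms of S¹ preserving C is countable. -/
open Set Filter Topology Asymptotics

/-- A 1-periodic subset of ℝ (the lift of a subset of the circle ℝ/ℤ). -/
def CirclePeriodic (C : Set ℝ) : Prop := ∀ x : ℝ, x ∈ C ↔ x + 1 ∈ C

/-- Lift of a Cantor subset of the circle `ℝ/ℤ`. -/
def IsCircleCantorLift (C : Set ℝ) : Prop :=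
  C.Nonempty ∧ IsClosed C ∧ Perfect C ∧ IsTotallyDisconnected C ∧ CirclePeriodic C

/-- Sparseness for a subset of the circle, via its periodic lift: any arc between two
points of `C` contains a complementary arc of relative length at least `σ`. -/
def CircleSparse (σ : ℝ) (C : Set ℝ) : Prop :=
  ∀ a ∈ C, ∀ b ∈ C, a < b → b < a + 1 →
    ∃ α β : ℝ, a ≤ α ∧ α < β ∧ β ≤ b ∧ Set.Ioo α β ∩ C = ∅ ∧ σ * (b - a) ≤ β - α

/-- Lift of a `C¹` diffeomorphism of the circle `ℝ/ℤ`: a `C¹` diffeomorphism of ℝ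
commuting with the unit translation up to sign (degree ±1). -/
def IsCircleDiffeoLift (φ ψ : ℝ → ℝ) : Prop :=
  IsC1DiffeoPair φ ψ ∧ ((∀ x, φ (x + 1) = φ x + 1) ∨ (∀ x, φ (x + 1) = φ x - 1))

/-!
Two `C¹` lifts `φ₁, φ₂` preserving `C` that agree at a gap endpoint, and whose inverses have
uniformly close derivatives (relative to a bound on `φ₁'`), agree on `C`. Indeed `h = φ₂⁻¹ ∘ φ₁`
is then an increasing degree-one lift fixing a point of `C`, with all slopes in `[ρ, ρ⁻¹]` for
some `ρ > 1 - σ`. If `h` moved some `x₀ ∈ C`, say to the left (otherwise use `h⁻¹`), let `u` be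
the last fixed point of `C` before `x₀`. All of `C ∩ (u, x₀]` moves left, so the iterates of a
sparse gap between `u` and `x₀` are disjoint gaps inside `[u, x₀]` of lengths at least
`ρ ^ j σ (x₀ - u)`, whose sum `σ (x₀ - u) / (1 - ρ)` exceeds `x₀ - u`. Gap endpoints are
countable and `C([0, 1], ℝ)` is separable, so countably many data suffice.
-/

open Function TopologicalSpace

def IsGap_s5 (C : Set ℝ) (p q : ℝ) : Prop :=
  p ∈ C ∧ q ∈ C ∧ p < q ∧ Ioo p q ∩ C = ∅

def gapEndpoints (C : Set ℝ) : Set ℝ :=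
  {x | ∃ y, IsGap_s5 C x y ∨ IsGap_s5 C y x}

variable {C : Set ℝ} {σ ρ : ℝ}

theorem exists_isGap_of_notMem (hC : IsClosed C) {a b z : ℝ} (ha : a ∈ C) (hb : b ∈ C)
    (haz : a ≤ z) (hzb : z ≤ b) (hz : z ∉ C) :
    ∃ p q, IsGap_s5 C p q ∧ a ≤ p ∧ p < z ∧ z < q ∧ q ≤ b := by
  have hbddL : BddAbove (C ∩ Icc a z) := bddAbove_Icc.mono inter_subset_right
  have hbddR : BddBelow (C ∩ Icc z b) := bddBelow_Icc.mono inter_subset_right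
  have hp : sSup (C ∩ Icc a z) ∈ C ∩ Icc a z :=
    (hC.inter isClosed_Icc).csSup_mem ⟨a, ha, le_rfl, haz⟩ hbddL
  have hq : sInf (C ∩ Icc z b) ∈ C ∩ Icc z b :=
    (hC.inter isClosed_Icc).csInf_mem ⟨b, hb, hzb, le_rfl⟩ hbddR
  have hpz : sSup (C ∩ Icc a z) < z := hp.2.2.lt_of_ne fun h => hz (h ▸ hp.1)
  have hzq : z < sInf (C ∩ Icc z b) := hq.2.1.lt_of_ne fun h => hz (h ▸ hq.1)
  refine ⟨_, _, ⟨hp.1, hq.1, hpz.trans hzq, ?_⟩, hp.2.1, hpz, hzq, hq.2.2⟩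
  refine eq_empty_of_forall_notMem fun w ⟨⟨hpw, hwq⟩, hw⟩ => ?_
  rcases le_total w z with hwz | hzw
  · exact (le_csSup hbddL ⟨hw, hp.2.1.trans hpw.le, hwz⟩).not_gt hpw
  · exact (csInf_le hbddR ⟨hw, hzw, hwq.le.trans hq.2.2⟩).not_gt hwq

theorem CircleSparse.exists_isGap (hsp : CircleSparse σ C) (hC : IsClosed C) {a b : ℝ}
    (ha : a ∈ C) (hb : b ∈ C) (hab : a < b) (hba : b < a + 1) :
    ∃ p q, IsGap_s5 C p q ∧ a ≤ p ∧ q ≤ b ∧ σ * (b - a) ≤ q - p := by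
  obtain ⟨α, β, haα, hαβ, hβb, hαβC, hlen⟩ := hsp a ha b hb hab hba
  have hm : (α + β) / 2 ∈ Ioo α β := ⟨by linarith, by linarith⟩
  obtain ⟨p, q, hpq, hap, hpm, hmq, hqb⟩ := exists_isGap_of_notMem hC ha hb
    (haα.trans hm.1.le) (hm.2.le.trans hβb) fun h => hαβC.subset ⟨hm, h⟩
  have hpα : p ≤ α := not_lt.1 fun h => hαβC.subset ⟨⟨h, hpm.trans hm.2⟩, hpq.1⟩
  have hβq : β ≤ q := not_lt.1 fun h => hαβC.subset ⟨⟨hm.1.trans hmq, h⟩, hpq.2.1⟩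
  exact ⟨p, q, hpq, hap, hqb, by linarith⟩

theorem CircleSparse.exists_notMem (hsp : CircleSparse σ C) : ∃ z, z ∉ C := by
  by_contra! hall
  obtain ⟨α, β, -, hαβ, -, hαβC, -⟩ := hsp 0 (hall 0) (1 / 2) (hall _) (by norm_num) (by norm_num)
  exact hαβC.subset ⟨⟨by linarith, by linarith⟩, hall ((α + β) / 2)⟩

theorem CirclePeriodic.add_int_mem (hper : CirclePeriodic C) {x : ℝ} (hx : x ∈ C) (k : ℤ) :
    x + k ∈ C := by
  have hP : Periodic (· ∈ C) (1 : ℝ) := fun x => propext (hper x).symm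
  simpa using (hP.int_mul k x).mpr hx

theorem CirclePeriodic.exists_isGap (hper : CirclePeriodic C) (hC : IsClosed C)
    (hne : C.Nonempty) {z : ℝ} (hz : z ∉ C) : ∃ p q, IsGap_s5 C p q := by
  obtain ⟨c, hc⟩ := hne
  have ha : c + ⌊z - c⌋ ∈ C := hper.add_int_mem hc _
  obtain ⟨p, q, hpq, -⟩ := exists_isGap_of_notMem hC ha ((hper _).1 ha)
    (by linarith [Int.floor_le (z - c)]) (by linarith [Int.lt_floor_add_one (z - c)]) hz
  exact ⟨p, q, hpq⟩

theorem IsGap_s5.image {g : ℝ → ℝ} (hg : StrictMono g) (hgC : g '' C = C) {p q : ℝ}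
    (h : IsGap_s5 C p q) : IsGap_s5 C (g p) (g q) := by
  obtain ⟨hp, hq, hpq, hgap⟩ := h
  refine ⟨hgC ▸ mem_image_of_mem g hp, hgC ▸ mem_image_of_mem g hq, hg hpq, ?_⟩
  refine eq_empty_of_forall_notMem fun z ⟨⟨h1, h2⟩, hz⟩ => ?_
  obtain ⟨w, hw, rfl⟩ := hgC.symm ▸ hz
  exact hgap.subset ⟨⟨hg.lt_iff_lt.1 h1, hg.lt_iff_lt.1 h2⟩, hw⟩

theorem IsGap_s5.image_of_strictAnti {g : ℝ → ℝ} (hg : StrictAnti g) (hgC : g '' C = C) {p q : ℝ}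
    (h : IsGap_s5 C p q) : IsGap_s5 C (g q) (g p) := by
  obtain ⟨hp, hq, hpq, hgap⟩ := h
  refine ⟨hgC ▸ mem_image_of_mem g hq, hgC ▸ mem_image_of_mem g hp, hg hpq, ?_⟩
  refine eq_empty_of_forall_notMem fun z ⟨⟨h1, h2⟩, hz⟩ => ?_
  obtain ⟨w, hw, rfl⟩ := hgC.symm ▸ hz
  exact hgap.subset ⟨⟨hg.lt_iff_gt.1 h2, hg.lt_iff_gt.1 h1⟩, hw⟩

theorem IsGap_s5.le_left_of_lt_right {p q x : ℝ} (h : IsGap_s5 C p q) (hx : x ∈ C) (hxq : x < q) :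
    x ≤ p :=
  not_lt.1 fun hpx => h.2.2.2.subset ⟨⟨hpx, hxq⟩, hx⟩

theorem countable_gapEndpoints (C : Set ℝ) : (gapEndpoints C).Countable := by
  refine ((countable_setOfPred_isolated_right_within (s := C)).union
    (countable_setOfPred_isolated_left_within (s := C))).mono ?_
  rintro x ⟨y, ⟨hx, -, hxy, hgap⟩ | ⟨-, hx, hyx, hgap⟩⟩
  · refine .inl ⟨hx, ?_⟩
    rw [← empty_mem_iff_bot, mem_nhdsWithin_iff_exists_mem_nhds_inter]
    exact ⟨Iio y, Iio_mem_nhds hxy, fun w ⟨hwy, hw, hxw⟩ => hgap.subset ⟨⟨hxw, hwy⟩, hw⟩⟩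
  · refine .inr ⟨hx, ?_⟩
    rw [← empty_mem_iff_bot, mem_nhdsWithin_iff_exists_mem_nhds_inter]
    exact ⟨Ioi y, Ioi_mem_nhds hyx, fun w ⟨hyw, hw, hwx⟩ => hgap.subset ⟨⟨hyw, hwx⟩, hw⟩⟩

theorem mapsTo_gapEndpoints {φ : ℝ → ℝ} (hφ : Continuous φ) (hinj : Injective φ)
    (hφC : φ '' C = C) : MapsTo φ (gapEndpoints C) (gapEndpoints C) := by
  rintro x ⟨y, hxy⟩
  rcases hφ.strictMono_of_inj hinj with hmono | hanti
  · exact ⟨φ y, hxy.imp (·.image hmono hφC) (·.image hmono hφC)⟩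
  · exact ⟨φ y, hxy.symm.imp (·.image_of_strictAnti hanti hφC) (·.image_of_strictAnti hanti hφC)⟩

theorem exists_fixed_mem_Icc (hC : IsClosed C) {g : ℝ → ℝ} (hg : Continuous g) (hmono : Monotone g)
    (hgC : MapsTo g C C) {x y : ℝ} (hx : x ∈ C) (hxy : x ≤ y) (hxg : x ≤ g x) (hgy : g y ≤ y) :
    ∃ z ∈ C ∩ Icc x y, g z = z := by
  set A := C ∩ Icc x y ∩ {w | w ≤ g w}
  have hbdd : BddAbove A := bddAbove_Icc.mono (inter_subset_left.trans inter_subset_right)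
  have hz : sSup A ∈ A :=
    ((hC.inter isClosed_Icc).inter (isClosed_le continuous_id hg)).csSup_mem
      ⟨x, ⟨hx, le_rfl, hxy⟩, hxg⟩ hbdd
  -- `g` maps the largest point of `A` back into `A`, hence not to the right of it.
  have hgz : g (sSup A) ∈ A :=
    ⟨⟨hgC hz.1.1, hz.1.2.1.trans hz.2, (hmono hz.1.2.2).trans hgy⟩, hmono hz.2⟩
  exact ⟨sSup A, hz.1, le_antisymm (le_csSup hbdd hgz) hz.2⟩

theorem le_one_sub_mul_of_sum_geometric_le {ρ ℓ t : ℝ} (hρ0 : 0 ≤ ρ) (hρ1 : ρ < 1) (hℓ : 0 ≤ ℓ)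
    (h : ∀ N, ∑ j ∈ Finset.range N, ρ ^ j * ℓ ≤ t) : ℓ ≤ (1 - ρ) * t := by
  have := Real.tsum_le_of_sum_range_le (fun j => mul_nonneg (pow_nonneg hρ0 j) hℓ) h
  rwa [tsum_mul_right, tsum_geometric_of_lt_one hρ0 hρ1, inv_mul_le_iff₀ (by linarith)] at this

theorem CircleSparse.not_forall_apply_lt (hsp : CircleSparse σ C) (hC : IsClosed C)
    (hρ0 : 0 < ρ) (hρ1 : ρ < 1) (hρσ : 1 - σ < ρ) {g : ℝ → ℝ}
    (hg : ∀ x y, x < y → ρ * (y - x) ≤ g y - g x) (hgC : g '' C = C)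
    {u b : ℝ} (hu : u ∈ C) (hgu : g u = u) (hb : b ∈ C) (hub : u < b) (hbu : b < u + 1) :
    ¬ ∀ x ∈ C, u < x → x ≤ b → g x < x := by
  intro hmoves
  have hmono : StrictMono g := fun x y hxy => by nlinarith [hg x y hxy]
  have hgC' : MapsTo g C C := fun x hx => hgC ▸ mem_image_of_mem g hx
  obtain ⟨p, q, hpq, hup, hqb, hlen⟩ := hsp.exists_isGap hC hu hb hub hbu
  set P : ℕ → ℝ := fun j => g^[j] p
  set Q : ℕ → ℝ := fun j => g^[j] q
  have hP : ∀ j, P (j + 1) = g (P j) := fun j => iterate_succ_apply' g j p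
  have hQ : ∀ j, Q (j + 1) = g (Q j) := fun j => iterate_succ_apply' g j q
  have hiter : ∀ j, IsGap_s5 C (P j) (Q j) ∧ u ≤ P j ∧ Q (j + 1) ≤ P j ∧ Q j ≤ b ∧
      ρ ^ j * (q - p) ≤ Q j - P j := by
    have hstep : ∀ {p q}, IsGap_s5 C p q → u ≤ p → q ≤ b → g q ≤ p := fun hpq hup hqb =>
      hpq.le_left_of_lt_right (hgC' hpq.2.1) (hmoves _ hpq.2.1 (hup.trans_lt hpq.2.2.1) hqb)
    intro j
    induction j with
    | zero => exact ⟨hpq, hup, hstep hpq hup hqb, hqb, by simp [P, Q]⟩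
    | succ j ih =>
      obtain ⟨hgap, huP, hQP, hQb, hlenj⟩ := ih
      have hgap' : IsGap_s5 C (P (j + 1)) (Q (j + 1)) := hP j ▸ hQ j ▸ hgap.image hmono hgC
      have huP' : u ≤ P (j + 1) := hP j ▸ hgu ▸ hmono.monotone huP
      have hQb' : Q (j + 1) ≤ b := hQP.trans (hgap.2.2.1.le.trans hQb)
      refine ⟨hgap', huP', (hQ (j + 1)).trans_le (hstep hgap' huP' hQb'), hQb', ?_⟩
      calc ρ ^ (j + 1) * (q - p) = ρ * (ρ ^ j * (q - p)) := by ring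
        _ ≤ ρ * (Q j - P j) := by gcongr
        _ ≤ Q (j + 1) - P (j + 1) := hP j ▸ hQ j ▸ hg _ _ hgap.2.2.1
  have hsum : ∀ N, ∑ j ∈ Finset.range N, ρ ^ j * (q - p) ≤ b - u := fun N =>
    calc ∑ j ∈ Finset.range N, ρ ^ j * (q - p)
        ≤ ∑ j ∈ Finset.range N, (Q j - Q (j + 1)) :=
          Finset.sum_le_sum fun j _ => by
            obtain ⟨-, -, hQP, -, hlenj⟩ := hiter j
            linarith
      _ = Q 0 - Q N := Finset.sum_range_sub' Q N
      _ ≤ b - u := by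
          obtain ⟨hgapN, huPN, -⟩ := hiter N
          linarith [show Q 0 = q from rfl, hgapN.2.2.1]
  have := le_one_sub_mul_of_sum_geometric_le hρ0.le hρ1 (sub_nonneg.2 hpq.2.2.1.le) hsum
  nlinarith

theorem CircleSparse.exists_fixed_mem_Ioc (hsp : CircleSparse σ C) (hC : IsClosed C)
    (hρ0 : 0 < ρ) (hρ1 : ρ < 1) (hρσ : 1 - σ < ρ) (g : ℝ ≃o ℝ)
    (hg : ∀ x y, x < y → ρ * (y - x) ≤ g y - g x) (hgC : g '' C = C) {u x₀ : ℝ}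
    (hu : u ∈ C) (hgu : g u = u) (hx₀ : x₀ ∈ C) (hux₀ : u < x₀) (hx₀u : x₀ < u + 1)
    (hgx₀ : g x₀ < x₀) : ∃ w ∈ C, u < w ∧ w ≤ x₀ ∧ g w = w := by
  by_contra! hnofix
  refine hsp.not_forall_apply_lt hC hρ0 hρ1 hρσ hg hgC hu hgu hx₀ hux₀ hx₀u
    fun x hx hux hxx₀ => lt_of_not_ge fun hxg => ?_
  obtain ⟨w, ⟨hw, hxw, hwx₀⟩, hgw⟩ := exists_fixed_mem_Icc hC g.continuous g.monotone
    (fun y hy => hgC ▸ mem_image_of_mem g hy) hx hxx₀ hxg hgx₀.le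
  exact hnofix w hw (hux.trans_le hxw) hwx₀ hgw

theorem OrderIso.mul_sub_le_symm_sub (h : ℝ ≃o ℝ) (hρ0 : 0 < ρ)
    (hup : ∀ x y, x < y → h y - h x ≤ ρ⁻¹ * (y - x)) {x y : ℝ} (hxy : x < y) :
    ρ * (y - x) ≤ h.symm y - h.symm x := by
  have := hup _ _ (h.symm.strictMono hxy)
  rwa [h.apply_symm_apply, h.apply_symm_apply, le_inv_mul_iff₀ hρ0] at this

theorem CircleSparse.eqOn_id_of_orderIso (hsp : CircleSparse σ C) (hC : IsClosed C)
    (hper : CirclePeriodic C) (hρ0 : 0 < ρ) (hρ1 : ρ < 1) (hρσ : 1 - σ < ρ) (h : ℝ ≃o ℝ)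
    (hlow : ∀ x y, x < y → ρ * (y - x) ≤ h y - h x)
    (hup : ∀ x y, x < y → h y - h x ≤ ρ⁻¹ * (y - x)) (hhC : h '' C = C)
    (hdeg : ∀ x, h (x + 1) = h x + 1) {c : ℝ} (hc : c ∈ C) (hfix : h c = c) : EqOn h id C := by
  intro x₀ hx₀
  by_contra hmoved
  set c' := c + ⌊x₀ - c⌋
  have hc' : c' ∈ C := hper.add_int_mem hc _
  have hfix' : h c' = c' := by
    have hP : Periodic (fun x => h x - x) 1 := fun x => by simp only [hdeg]; ring
    have := hP.int_mul ⌊x₀ - c⌋ c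
    simp only [mul_one, hfix, sub_self] at this
    linarith
  have hc'x₀ : c' ≤ x₀ := by linarith [Int.floor_le (x₀ - c)]
  have hx₀c' : x₀ < c' + 1 := by linarith [Int.lt_floor_add_one (x₀ - c)]
  set F := C ∩ Icc c' x₀ ∩ {w | h w = w}
  have hbdd : BddAbove F := bddAbove_Icc.mono (inter_subset_left.trans inter_subset_right)
  have hu : sSup F ∈ F :=
    ((hC.inter isClosed_Icc).inter (isClosed_eq h.continuous continuous_id)).csSup_mem
      ⟨c', ⟨hc', le_rfl, hc'x₀⟩, hfix'⟩ hbdd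
  set u := sSup F
  have hux₀ : u < x₀ := hu.1.2.2.lt_of_ne fun e => hmoved (e ▸ hu.2)
  have hx₀u : x₀ < u + 1 := by linarith [hu.1.2.1]
  have hlast : ∀ w ∈ C, u < w → w ≤ x₀ → h w ≠ w := fun w hw huw hwx₀ e =>
    (le_csSup hbdd ⟨⟨hw, hu.1.2.1.trans huw.le, hwx₀⟩, e⟩).not_gt huw
  rcases (Ne.lt_or_gt hmoved : h x₀ < x₀ ∨ x₀ < h x₀) with hleft | hright
  · obtain ⟨w, hw, huw, hwx₀, hhw⟩ := hsp.exists_fixed_mem_Ioc hC hρ0 hρ1 hρσ h hlow hhC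
      hu.1.1 hu.2 hx₀ hux₀ hx₀u hleft
    exact hlast w hw huw hwx₀ hhw
  · obtain ⟨w, hw, huw, hwx₀, hhw⟩ := hsp.exists_fixed_mem_Ioc hC hρ0 hρ1 hρσ h.symm
      (fun x y hxy => h.mul_sub_le_symm_sub hρ0 hup hxy)
      (by nth_rw 1 [← hhC]; exact h.symm_image_image C)
      hu.1.1 (h.symm_apply_eq.2 hu.2.symm) hx₀ hux₀ hx₀u (h.symm_apply_lt.2 hright)
    exact hlast w hw huw hwx₀ (h.symm_apply_eq.1 hhw).symm

theorem slope_bounds_of_abs_deriv_sub_one_le {h : ℝ → ℝ} (hd : Differentiable ℝ h) (hρ0 : 0 < ρ)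
    (hder : ∀ x, |deriv h x - 1| ≤ 1 - ρ) {x y : ℝ} (hxy : x ≤ y) :
    ρ * (y - x) ≤ h y - h x ∧ h y - h x ≤ ρ⁻¹ * (y - x) := by
  refine ⟨mul_sub_le_image_sub_of_le_deriv hd (fun z => by linarith [(abs_le.1 (hder z)).1]) hxy,
    ?_⟩
  have h2ρ : 2 - ρ ≤ ρ⁻¹ := by
    refine ((le_inv_mul_iff₀ hρ0).2 ?_).trans_eq (mul_one _)
    nlinarith [sq_nonneg (1 - ρ)]
  calc h y - h x ≤ (2 - ρ) * (y - x) :=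
        image_sub_le_mul_sub_of_deriv_le hd (fun z => by linarith [(abs_le.1 (hder z)).2]) hxy
    _ ≤ ρ⁻¹ * (y - x) := by gcongr

variable {φ ψ φ₁ ψ₁ φ₂ ψ₂ : ℝ → ℝ}

theorem deriv_comp_sub_one_of_leftInverse (hφ₁ : Differentiable ℝ φ₁)
    (hψ₁ : Differentiable ℝ ψ₁) (hψ₂ : Differentiable ℝ ψ₂) (hinv : LeftInverse ψ₁ φ₁) (x : ℝ) :
    deriv (ψ₂ ∘ φ₁) x - 1 = (deriv ψ₂ (φ₁ x) - deriv ψ₁ (φ₁ x)) * deriv φ₁ x := by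
  have h1 : deriv (ψ₁ ∘ φ₁) x = 1 := by rw [show ψ₁ ∘ φ₁ = id from funext hinv, deriv_id]
  rw [deriv_comp x (hψ₁ _) (hφ₁ _)] at h1
  rw [deriv_comp x (hψ₂ _) (hφ₁ _), ← h1]
  ring

theorem periodic_deriv_of_map_add {f : ℝ → ℝ} {c e : ℝ} (hf : ∀ x, f (x + c) = f x + e) :
    Periodic (deriv f) c := fun x => by
  rw [← deriv_comp_add_const, show (fun y => f (y + c)) = fun y => f y + e from funext hf,
    deriv_add_const]

theorem Function.LeftInverse.map_add_of_map_add_one (hli : LeftInverse ψ φ)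
    (hri : RightInverse ψ φ) {d : ℝ} (hφ : ∀ x, φ (x + 1) = φ x + d) (y : ℝ) :
    ψ (y + d) = ψ y + 1 := by
  rw [← hri y, ← hφ, hli, hli]

theorem IsCircleDiffeoLift.exists_add_one (h : IsCircleDiffeoLift φ ψ) :
    ∃ d : ℝ, (d = 1 ∨ d = -1) ∧ ∀ x, φ (x + 1) = φ x + d := by
  rcases h.2 with h | h
  · exact ⟨1, .inl rfl, h⟩
  · exact ⟨-1, .inr rfl, fun x => by rw [h]; ring⟩

theorem IsCircleDiffeoLift.periodic_deriv (h : IsCircleDiffeoLift φ ψ) : Periodic (deriv φ) 1 := by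
  obtain ⟨d, -, hd⟩ := h.exists_add_one
  exact periodic_deriv_of_map_add hd

theorem IsCircleDiffeoLift.periodic_deriv_inv (h : IsCircleDiffeoLift φ ψ) :
    Periodic (deriv ψ) 1 := by
  obtain ⟨d, rfl | rfl, hd⟩ := h.exists_add_one
  · exact periodic_deriv_of_map_add (h.1.2.2.1.map_add_of_map_add_one h.1.2.2.2 hd)
  · simpa using (periodic_deriv_of_map_add (h.1.2.2.1.map_add_of_map_add_one h.1.2.2.2 hd)).neg

theorem IsCircleDiffeoLift.exists_abs_deriv_le (h : IsCircleDiffeoLift φ ψ) :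
    ∃ n : ℕ, ∀ x, |deriv φ x| ≤ n := by
  obtain ⟨K, hK⟩ := isBounded_iff_forall_norm_le.1
    (h.periodic_deriv.isBounded_of_continuous one_ne_zero (h.1.1.continuous_deriv le_rfl))
  exact ⟨⌈K⌉₊, fun x => (hK _ (mem_range_self x)).trans (Nat.le_ceil K)⟩

theorem IsCircleDiffeoLift.comp_add_one (h₁ : IsCircleDiffeoLift φ₁ ψ₁)
    (h₂ : IsCircleDiffeoLift φ₂ ψ₂) (hmono : StrictMono (ψ₂ ∘ φ₁)) (x : ℝ) :
    ψ₂ (φ₁ (x + 1)) = ψ₂ (φ₁ x) + 1 := by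
  obtain ⟨d₁, hd₁, hφ₁⟩ := h₁.exists_add_one
  obtain ⟨d₂, hd₂, hφ₂⟩ := h₂.exists_add_one
  have hψ₂ := h₂.1.2.2.1.map_add_of_map_add_one h₂.1.2.2.2 hφ₂
  obtain rfl | rfl : d₁ = d₂ ∨ d₁ = -d₂ := by
    rcases hd₁ with rfl | rfl <;> rcases hd₂ with rfl | rfl <;> norm_num
  · rw [hφ₁, hψ₂]
  · -- then `ψ₂ ∘ φ₁` would drop by one over `[0, 1]`
    have h0 := hψ₂ (φ₁ 0 + -d₂)
    rw [neg_add_cancel_right, ← hφ₁, zero_add] at h0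
    have h01 := hmono (zero_lt_one' ℝ)
    simp only [comp_apply] at h01
    linarith

theorem CircleSparse.eqOn_of_deriv_inv_close (hsp : CircleSparse σ C) (hC : IsClosed C)
    (hper : CirclePeriodic C) (hρ0 : 0 < ρ) (hρ1 : ρ < 1) (hρσ : 1 - σ < ρ)
    (h₁ : IsCircleDiffeoLift φ₁ ψ₁) (h₂ : IsCircleDiffeoLift φ₂ ψ₂)
    (hC₁ : φ₁ '' C = C) (hC₂ : φ₂ '' C = C)
    (hclose : ∀ x, |deriv φ₁ x| * |deriv ψ₂ (φ₁ x) - deriv ψ₁ (φ₁ x)| ≤ 1 - ρ)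
    {c : ℝ} (hc : c ∈ C) (hφc : φ₁ c = φ₂ c) : EqOn φ₁ φ₂ C := by
  obtain ⟨hφ₁, hψ₁, hli₁, hri₁⟩ := h₁.1
  obtain ⟨-, hψ₂, hli₂, hri₂⟩ := h₂.1
  have hdφ₁ := hφ₁.differentiable one_ne_zero
  have hdψ₂ := hψ₂.differentiable one_ne_zero
  have hder : ∀ x, |deriv (ψ₂ ∘ φ₁) x - 1| ≤ 1 - ρ := fun x => by
    rw [deriv_comp_sub_one_of_leftInverse hdφ₁ (hψ₁.differentiable one_ne_zero) hdψ₂ hli₁,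
      abs_mul, mul_comm]
    exact hclose x
  have hslope := fun x y (hxy : x < y) =>
    slope_bounds_of_abs_deriv_sub_one_le (hdψ₂.comp hdφ₁) hρ0 hder hxy.le
  have hmono : StrictMono (ψ₂ ∘ φ₁) := fun x y hxy => by nlinarith [(hslope x y hxy).1]
  have hsurj : Surjective (ψ₂ ∘ φ₁) := fun y => ⟨ψ₁ (φ₂ y), by simp [hri₁ _, hli₂ y]⟩
  have hfix := hsp.eqOn_id_of_orderIso hC hper hρ0 hρ1 hρσ
    (hmono.orderIsoOfSurjective _ hsurj) (fun x y hxy => (hslope x y hxy).1)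
    (fun x y hxy => (hslope x y hxy).2) (by
      rw [StrictMono.coe_orderIsoOfSurjective, image_comp, hC₁]
      nth_rw 1 [← hC₂]
      exact hli₂.image_image C)
    (h₁.comp_add_one h₂ hmono) hc (by simp [hφc, hli₂ c])
  intro x hx
  have : ψ₂ (φ₁ x) = x := hfix hx
  rw [← hri₂ (φ₁ x), this]

theorem countable_of_dist_lt_imp_eq {α X : Type*} [PseudoMetricSpace X] [SeparableSpace X]
    {S : Set α} (P : α → X → Prop) (hP : ∀ a ∈ S, ∃ x, P a x) {ε : ℝ} (hε : 0 < ε)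
    (hsep : ∀ a b x y, P a x → P b y → dist x y < ε → a = b) : S.Countable := by
  obtain ⟨D, hDc, hD⟩ := exists_countable_dense X
  have hnear : ∀ a ∈ S, ∃ d ∈ D, ∃ x, P a x ∧ dist x d < ε / 2 := fun a ha => by
    obtain ⟨x, hx⟩ := hP a ha
    obtain ⟨d, hd, hxd⟩ := hD.exists_dist_lt x (half_pos hε)
    exact ⟨d, hd, x, hx, hxd⟩
  choose F hFD x hx hxF using hnear
  have hinj : Injective fun a : S => (⟨F a a.2, hFD a a.2⟩ : D) := by
    rintro ⟨a, ha⟩ ⟨b, hb⟩ hab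
    refine Subtype.ext (hsep a b _ _ (hx a ha) (hx b hb) ?_)
    calc dist (x a ha) (x b hb) ≤ dist (x a ha) (F a ha) + dist (x b hb) (F b hb) := by
          rw [show F a ha = F b hb from congrArg Subtype.val hab]
          exact dist_triangle_right _ _ _
      _ < ε := by linarith [hxF a ha, hxF b hb]
  have := hDc.to_subtype
  exact Set.countable_coe_iff.1 hinj.countable

theorem abs_sub_le_dist_of_periodic {F G : ℝ → ℝ} (hF : Periodic F 1) (hG : Periodic G 1)
    {Φ Γ : C(Icc (0 : ℝ) 1, ℝ)} (hΦ : ∀ y, Φ y = F y) (hΓ : ∀ y, Γ y = G y) (x : ℝ) :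
    |F x - G x| ≤ dist Φ Γ := by
  obtain ⟨y, hy, hxy⟩ := (hF.sub hG).exists_mem_Ico₀ one_pos x
  have := ContinuousMap.dist_apply_le_dist (f := Φ) (g := Γ) ⟨y, Ico_subset_Icc_self hy⟩
  rw [hΦ, hΓ, Real.dist_eq] at this
  rwa [show F x - G x = F y - G y from hxy]

def IsInducedBy (C : Set ℝ) (f : C → AddCircle (1 : ℝ)) (φ ψ : ℝ → ℝ) : Prop :=
  IsCircleDiffeoLift φ ψ ∧ φ '' C = C ∧ ∀ x : C, f x = (↑(φ (x : ℝ)) : AddCircle (1 : ℝ))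

theorem CircleSparse.countable_isInducedBy_of_abs_deriv_le (hsp : CircleSparse σ C)
    (hC : IsClosed C) (hper : CirclePeriodic C) (hρ0 : 0 < ρ) (hρ1 : ρ < 1) (hρσ : 1 - σ < ρ)
    {c : ℝ} (hc : c ∈ C) (n : ℕ) (e : ℝ) :
    {f | ∃ φ ψ, IsInducedBy C f φ ψ ∧ (∀ x, |deriv φ x| ≤ n) ∧ φ c = e}.Countable := by
  refine countable_of_dist_lt_imp_eq (X := C(Icc (0 : ℝ) 1, ℝ))
    (fun f Ψ => ∃ φ ψ, (IsInducedBy C f φ ψ ∧ (∀ x, |deriv φ x| ≤ n) ∧ φ c = e) ∧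
      ∀ y, Ψ y = deriv ψ y) ?_ (div_pos (sub_pos.2 hρ1) (n.cast_add_one_pos (α := ℝ))) ?_
  · rintro f ⟨φ, ψ, hf⟩
    have hψ : Continuous (deriv ψ) := hf.1.1.1.2.1.continuous_deriv le_rfl
    exact ⟨⟨fun y => deriv ψ y, hψ.comp continuous_subtype_val⟩, φ, ψ, hf, fun y => rfl⟩
  · rintro f₁ f₂ Ψ₁ Ψ₂ ⟨φ₁, ψ₁, ⟨⟨h₁, hC₁, hf₁⟩, hn, hc₁⟩, hΨ₁⟩
      ⟨φ₂, ψ₂, ⟨⟨h₂, hC₂, hf₂⟩, -, hc₂⟩, hΨ₂⟩ hdist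
    have hclose : ∀ x, |deriv φ₁ x| * |deriv ψ₂ (φ₁ x) - deriv ψ₁ (φ₁ x)| ≤ 1 - ρ := fun x => by
      have hψ := abs_sub_le_dist_of_periodic h₂.periodic_deriv_inv h₁.periodic_deriv_inv hΨ₂ hΨ₁
        (φ₁ x)
      rw [dist_comm] at hψ
      calc |deriv φ₁ x| * |deriv ψ₂ (φ₁ x) - deriv ψ₁ (φ₁ x)|
          ≤ n * ((1 - ρ) / (n + 1)) := by gcongr; exacts [hn x, hψ.trans hdist.le]
        _ ≤ 1 - ρ := by
          rw [mul_div_assoc', div_le_iff₀ (by positivity)]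
          nlinarith
    have heq := hsp.eqOn_of_deriv_inv_close hC hper hρ0 hρ1 hρσ h₁ h₂ hC₁ hC₂ hclose hc
      (hc₁.trans hc₂.symm)
    funext x
    rw [hf₁, hf₂, heq x.2]

/-- If `C` is a sparse Cantor subset of the circle `S¹ = ℝ/ℤ`, the group of
transformations of `C` induced by `C¹` diffeomorphisms of `S¹` preserving `C`
is countable. -/
theorem diff1_circle_of_sparse_countable (σ : ℝ) (hσ : 0 < σ) (C : Set ℝ)
    (hC : IsCircleCantorLift C) (hsp : CircleSparse σ C) :
    Set.Countable {f : C → AddCircle (1 : ℝ) | ∃ φ ψ : ℝ → ℝ,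
      IsCircleDiffeoLift φ ψ ∧ φ '' C = C ∧
      ∀ x : C, f x = (↑(φ (x : ℝ)) : AddCircle (1 : ℝ))} := by
  obtain ⟨hne, hCcl, -, -, hper⟩ := hC
  obtain ⟨ρ, hρ0, hρ1, hρσ⟩ : ∃ ρ : ℝ, 0 < ρ ∧ ρ < 1 ∧ 1 - σ < ρ :=
    ⟨max (1 / 2) (1 - σ / 2), by positivity, max_lt (by norm_num) (by linarith),
      by linarith [le_max_right (1 / 2 : ℝ) (1 - σ / 2)]⟩
  obtain ⟨z, hz⟩ := hsp.exists_notMem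
  obtain ⟨c, q, hcq⟩ := hper.exists_isGap hCcl hne hz
  refine (countable_iUnion fun n : ℕ => (countable_gapEndpoints C).biUnion fun e _ =>
    hsp.countable_isInducedBy_of_abs_deriv_le hCcl hper hρ0 hρ1 hρσ hcq.1 n e).mono ?_
  rintro f ⟨φ, ψ, hφ, hφC, hf⟩
  obtain ⟨n, hn⟩ := hφ.exists_abs_deriv_le
  have he : φ c ∈ gapEndpoints C :=
    mapsTo_gapEndpoints hφ.1.1.continuous hφ.1.2.2.1.injective hφC ⟨q, .inl hcq⟩
  exact mem_iUnion.2 ⟨n, mem_iUnion₂.2 ⟨φ c, he, φ, ψ, ⟨hφ, hφC, hf⟩, hn, rfl⟩⟩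
end

section
/- Let C be a σ-sparse Cantor subset of ℝ and let φ be an orientation-preserving C¹ diffeomorphism of ℝ preserving C such that 1 − σ < φ'(x) < 1 + σ for all x ∈ C. Then φ restricted to C is the identity. -/
open Set Filter Topology Asymptotics

/-! If `g` moved a point `x₀ ∈ C` to the right, its orbit would increase to a fixed point
`L ∈ C` at which `g' > 1 - σ`, so on some `[a, L]` with `a ∈ C` the derivative exceeds some
`r ∈ (1 - σ, 1)`. By sparseness `[a, L]` contains a gap of `C` of length at least `σ (L - a)`.
Its images under `g` are again gaps, they lie in `[a, L]`, follow each other from left to right,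
and their lengths shrink at most by the factor `r` per step, so `σ (L - a) / (1 - r) ≤ L - a`,
contradicting `r > 1 - σ`. Applying this to `φ` and to `φ⁻¹` (whose derivative on `C` exceeds
`1 / (1 + σ) > 1 - σ`) shows that `φ` fixes `C`. -/

theorem SparseSet.le_one {σ : ℝ} {C : Set ℝ} (hsp : SparseSet σ C) {a b : ℝ} (ha : a ∈ C)
    (hb : b ∈ C) (hab : a < b) : σ ≤ 1 := by
  obtain ⟨α, β, haα, -, hβb, -, hlen⟩ := hsp a ha b hb hab
  by_contra! hσ
  nlinarith

theorem SparseSet.exists_gap_s6 {σ : ℝ} {C : Set ℝ} (hsp : SparseSet σ C) (hC : IsClosed C)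
    {a b : ℝ} (ha : a ∈ C) (hb : b ∈ C) (hab : a < b) :
    ∃ u ∈ C, ∃ v ∈ C, a ≤ u ∧ u < v ∧ v ≤ b ∧ Disjoint (Ioo u v) C ∧ σ * (b - a) ≤ v - u := by
  obtain ⟨α, β, haα, hαβ, hβb, hgap, hlen⟩ := hsp a ha b hb hab
  obtain ⟨u, ⟨huC, hau, huα⟩, hu⟩ :=
    (isCompact_Icc.inter_left hC).exists_isGreatest ⟨a, ha, le_rfl, haα⟩
  obtain ⟨v, ⟨hvC, hβv, hvb⟩, hv⟩ :=
    (isCompact_Icc.inter_left hC).exists_isLeast ⟨b, hb, hβb, le_rfl⟩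
  refine ⟨u, huC, v, hvC, hau, by linarith, hvb, disjoint_right.2 fun y hyC hy => ?_, by linarith⟩
  rcases le_or_gt y α with hyα | hαy
  · exact (hu ⟨hyC, hau.trans hy.1.le, hyα⟩).not_gt hy.1
  rcases lt_or_ge y β with hyβ | hβy
  · exact (eq_empty_iff_forall_notMem.1 hgap) y ⟨⟨hαy, hyβ⟩, hyC⟩
  · exact (hv ⟨hyC, hβy, hy.2.le.trans hvb⟩).not_gt hy.2

theorem disjoint_Ioo_map_of_surjOn {g : ℝ → ℝ} (hg : StrictMono g) {C : Set ℝ}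
    (hsurj : SurjOn g C C) {u v : ℝ} (hgap : Disjoint (Ioo u v) C) :
    Disjoint (Ioo (g u) (g v)) C := by
  refine disjoint_right.2 fun y hy hyI => ?_
  obtain ⟨z, hz, rfl⟩ := hsurj hy
  exact hgap.notMem_of_mem_right hz ⟨hg.lt_iff_lt.1 hyI.1, hg.lt_iff_lt.1 hyI.2⟩

theorem le_one_sub_mul_of_pow_mul_le_gaps {U V : ℕ → ℝ} {r ℓ a b : ℝ} (hr₀ : 0 ≤ r)
    (hr₁ : r < 1) (hlen : ∀ n, r ^ n * ℓ ≤ V n - U n) (hchain : ∀ n, V n ≤ U (n + 1))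
    (ha : a ≤ U 0) (hb : ∀ n, U n ≤ b) : ℓ ≤ (1 - r) * (b - a) := by
  have hsum : ∀ k, ∑ n ∈ Finset.range k, r ^ n * ℓ ≤ b - a := fun k =>
    calc ∑ n ∈ Finset.range k, r ^ n * ℓ ≤ ∑ n ∈ Finset.range k, (U (n + 1) - U n) :=
          Finset.sum_le_sum fun n _ => (hlen n).trans (by linarith [hchain n])
      _ = U k - U 0 := Finset.sum_range_sub U k
      _ ≤ b - a := by linarith [hb k]
  have hlim : (1 - r)⁻¹ * ℓ ≤ b - a :=
    le_of_tendsto' ((hasSum_geometric_of_lt_one hr₀ hr₁).mul_right ℓ).tendsto_sum_nat hsum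
  rwa [inv_mul_le_iff₀ (sub_pos.2 hr₁)] at hlim

theorem exists_isFixedPt_tendsto_iterate {g : ℝ → ℝ} (hg : Continuous g) (hmono : StrictMono g)
    {C : Set ℝ} (hC : IsCompact C) (hmaps : MapsTo g C C) {x₀ : ℝ} (hx₀ : x₀ ∈ C)
    (hlt : x₀ < g x₀) :
    ∃ L ∈ C, Function.IsFixedPt g L ∧ Tendsto (fun n => g^[n] x₀) atTop (𝓝 L) ∧
      ∀ n, g^[n] x₀ < L := by
  have horbit : StrictMono fun n => g^[n] x₀ := hmono.strictMono_iterate_of_lt_map hlt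
  have hbdd : BddAbove (range fun n => g^[n] x₀) :=
    hC.bddAbove.mono (range_subset_iff.2 fun n => hmaps.iterate n hx₀)
  have htend := tendsto_atTop_ciSup horbit.monotone hbdd
  exact ⟨_, hC.isClosed.mem_of_tendsto htend (Eventually.of_forall fun n => hmaps.iterate n hx₀),
    isFixedPt_of_tendsto_iterate htend hg.continuousAt, htend,
    fun n => (horbit n.lt_succ_self).trans_le (le_ciSup hbdd _)⟩

theorem lt_map_of_tendsto_iterate {g : ℝ → ℝ} (hg : Monotone g) {x₀ L : ℝ}
    (htend : Tendsto (fun n => g^[n] x₀) atTop (𝓝 L)) {w : ℝ} (hw : w ∈ Ico x₀ L) : w < g w := by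
  by_contra! hle
  have hinv : MapsTo g (Iic w) (Iic w) := fun y hy => (hg hy).trans hle
  exact hw.2.not_ge (le_of_tendsto' htend fun n => hinv.iterate n hw.1)

theorem iterate_gaps_ordered_in_Icc {g : ℝ → ℝ} (hmono : StrictMono g) {C : Set ℝ}
    (hmaps : MapsTo g C C) (hsurj : SurjOn g C C) {a L : ℝ} (hfix : Function.IsFixedPt g L)
    (hright : ∀ w ∈ Ico a L, w < g w)
    {u v : ℝ} (huC : u ∈ C) (hau : a ≤ u) (huv : u < v) (hvL : v ≤ L)
    (hgap : Disjoint (Ioo u v) C) (n : ℕ) :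
    a ≤ g^[n] u ∧ g^[n] u < g^[n] v ∧ g^[n] v ≤ L ∧ g^[n] v ≤ g^[n + 1] u := by
  have hau' : a ≤ g^[n] u :=
    hau.trans (hmono.monotone.monotone_iterate_of_le_map (hright u ⟨hau, huv.trans_le hvL⟩).le
      (Nat.zero_le n))
  have hvL' : g^[n] v ≤ L := (hfix.iterate n).eq ▸ (hmono.iterate n).monotone hvL
  have huv' : g^[n] u < g^[n] v := hmono.iterate n huv
  have hgap' := disjoint_Ioo_map_of_surjOn (hmono.iterate n) (hsurj.iterate n) hgap
  refine ⟨hau', huv', hvL', not_lt.1 fun hlt => hgap'.notMem_of_mem_right ?_ ⟨?_, hlt⟩⟩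
  · exact hmaps.iterate (n + 1) huC
  · rw [Function.iterate_succ_apply']
    exact hright _ ⟨hau', huv'.trans_le hvL'⟩

theorem pow_mul_le_iterate_sub_iterate {g : ℝ → ℝ} {s : Set ℝ} {r : ℝ} (hr : 0 ≤ r)
    (hg : ∀ x ∈ s, ∀ y ∈ s, x < y → r * (y - x) < g y - g x) {u v : ℝ}
    (hu : ∀ n, g^[n] u ∈ s) (hv : ∀ n, g^[n] v ∈ s) (huv : ∀ n, g^[n] u < g^[n] v) (n : ℕ) :
    r ^ n * (v - u) ≤ g^[n] v - g^[n] u := by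
  induction n with
  | zero => simp
  | succ n ih =>
    rw [Function.iterate_succ_apply', Function.iterate_succ_apply', pow_succ', mul_assoc]
    calc r * (r ^ n * (v - u)) ≤ r * (g^[n] v - g^[n] u) := mul_le_mul_of_nonneg_left ih hr
      _ ≤ g (g^[n] v) - g (g^[n] u) := (hg _ (hu n) _ (hv n) (huv n)).le

theorem map_le_self_of_sparseSet {σ : ℝ} (hσ : 0 < σ) {C : Set ℝ} (hC : IsCompact C)
    (hsp : SparseSet σ C) {g : ℝ → ℝ} (hg : ContDiff ℝ 1 g) (hmono : StrictMono g)
    (hpres : g '' C = C) (hder : ∀ x ∈ C, 1 - σ < deriv g x) {x₀ : ℝ} (hx₀ : x₀ ∈ C) :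
    g x₀ ≤ x₀ := by
  by_contra! hlt
  have hmaps : MapsTo g C C := mapsTo_iff_image_subset.2 hpres.subset
  obtain ⟨L, hLC, hfix, htend, horbit⟩ :=
    exists_isFixedPt_tendsto_iterate hg.continuous hmono hC hmaps hx₀ hlt
  have hσ₁ : σ ≤ 1 := hsp.le_one hx₀ hLC (horbit 0)
  obtain ⟨r, hσr, hr⟩ : ∃ r, 1 - σ < r ∧ r < min (deriv g L) 1 :=
    exists_between (lt_min (hder L hLC) (by linarith))
  have hnhds : {y | r < deriv g y} ∈ 𝓝 L :=
    (isOpen_lt continuous_const (hg.continuous_deriv le_rfl)).mem_nhds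
      (hr.trans_le (min_le_left _ _))
  obtain ⟨l, hlL, hl⟩ := exists_Ioc_subset_of_mem_nhds hnhds ⟨_, horbit 0⟩
  obtain ⟨N, hN⟩ := (htend.eventually (lt_mem_nhds hlL)).exists
  set a := g^[N] x₀
  have hmvt := (convex_Icc a L).mul_sub_lt_image_sub_of_lt_deriv hg.continuous.continuousOn
    (hg.differentiable one_ne_zero).differentiableOn
    fun y hy => hl ⟨hN.trans_le (interior_subset hy).1, (interior_subset hy).2⟩
  obtain ⟨u, huC, v, -, hau, huv, hvL, hgap, hσlen⟩ :=
    hsp.exists_gap_s6 hC.isClosed (hmaps.iterate N hx₀) hLC (horbit N)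
  have hright : ∀ w ∈ Ico a L, w < g w := fun w hw => lt_map_of_tendsto_iterate hmono.monotone
    htend ⟨(hmono.monotone.monotone_iterate_of_le_map hlt.le (Nat.zero_le N)).trans hw.1, hw.2⟩
  have hgaps :=
    iterate_gaps_ordered_in_Icc hmono hmaps hpres.superset hfix hright huC hau huv hvL hgap
  have hIcc : ∀ n, g^[n] u ∈ Icc a L ∧ g^[n] v ∈ Icc a L := fun n => by
    obtain ⟨h₁, h₂, h₃, -⟩ := hgaps n
    exact ⟨⟨h₁, by linarith⟩, ⟨by linarith, h₃⟩⟩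
  have hlen := pow_mul_le_iterate_sub_iterate (by linarith) hmvt (fun n => (hIcc n).1)
    (fun n => (hIcc n).2) fun n => (hgaps n).2.1
  have hshort : v - u ≤ (1 - r) * (L - a) :=
    le_one_sub_mul_of_pow_mul_le_gaps (by linarith) (hr.trans_le (min_le_right _ _)) hlen
      (fun n => (hgaps n).2.2.2) hau fun n => (hIcc n).1.2
  have hlong : (1 - r) * (L - a) < σ * (L - a) :=
    mul_lt_mul_of_pos_right (by linarith) (sub_pos.2 (horbit N))
  linarith

theorem StrictMono.one_sub_lt_deriv_of_rightInverse {φ ψ : ℝ → ℝ} (hmono : StrictMono φ)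
    (hφ : Differentiable ℝ φ) (hψ : Differentiable ℝ ψ) (hri : Function.RightInverse ψ φ)
    {σ y : ℝ} (hder : deriv φ (ψ y) < 1 + σ) : 1 - σ < deriv ψ y := by
  have hchain : deriv φ (ψ y) * deriv ψ y = 1 := by
    rw [← deriv_comp y (hφ (ψ y)) (hψ y), hri.comp_eq_id, deriv_id]
  have hpos : 0 < deriv φ (ψ y) :=
    hmono.monotone.deriv_nonneg.lt_of_ne fun h => by simp [← h] at hchain
  by_contra! h
  have hle : 1 ≤ deriv φ (ψ y) * (1 - σ) :=
    hchain.symm.trans_le (mul_le_mul_of_nonneg_left h hpos.le)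
  have hσ : 0 < 1 - σ := pos_of_mul_pos_right (by linarith) hpos.le
  nlinarith [mul_lt_mul_of_pos_right hder hσ, sq_nonneg σ]

/-- An orientation-preserving `C¹` diffeomorphism of ℝ preserving a σ-sparse Cantor
set `C`, whose derivative on `C` lies strictly between `1-σ` and `1+σ`, is the
identity on `C`. -/
theorem close_to_id_deriv_eq_id (σ : ℝ) (hσ : 0 < σ) (C : Set ℝ)
    (hC : IsCantorSet C) (hsp : SparseSet σ C)
    (φ ψ : ℝ → ℝ) (hφ : IsC1DiffeoPair φ ψ) (hmono : StrictMono φ)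
    (hpres : φ '' C = C)
    (hder : ∀ x ∈ C, 1 - σ < deriv φ x ∧ deriv φ x < 1 + σ) :
    ∀ x ∈ C, φ x = x := by
  obtain ⟨hφ₁, hψ₁, hli, hri⟩ := hφ
  have hcomp : IsCompact C := hC.2.1
  have hψmono : StrictMono ψ := (hmono.orderIsoOfRightInverse φ ψ hri).symm.strictMono
  have hψpres : ψ '' C = C := by nth_rewrite 1 [← hpres]; exact hli.image_image C
  have hψder : ∀ y ∈ C, 1 - σ < deriv ψ y := fun y hy =>
    hmono.one_sub_lt_deriv_of_rightInverse (hφ₁.differentiable one_ne_zero)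
      (hψ₁.differentiable one_ne_zero) hri
      (hder _ (hψpres ▸ mem_image_of_mem ψ hy)).2
  intro x hx
  have hφx : φ x ≤ x :=
    map_le_self_of_sparseSet hσ hcomp hsp hφ₁ hmono hpres (fun y hy => (hder y hy).1) hx
  have hψx : ψ x ≤ x := map_le_self_of_sparseSet hσ hcomp hsp hψ₁ hψmono hψpres hψder hx
  refine le_antisymm hφx ?_
  calc x = φ (ψ x) := (hri x).symm
    _ ≤ φ x := hmono.monotone hψx
end

section
/- For λ > 2, the central Cantor set C_λ is σ-sparse with σ = (λ−2)/λ: for any a, b ∈ C_λ with a < b there is an open interval (α, β) ⊆ (a, b) disjoint from C_λ with β − α ≥ ((λ−2)/λ)(b − a). -/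
open Set Filter Topology Asymptotics

/-- `C` is the central Cantor set of parameter `l`: the attractor of the IFS
`φ₀(x) = x/l`, `φ₁(x) = x/l + (l-1)/l`, i.e. the unique nonempty compact set with
`C = φ₀(C) ∪ φ₁(C)`. -/
def IsCentralCantor (l : ℝ) (C : Set ℝ) : Prop :=
  IsCompact C ∧ C.Nonempty ∧
    C = (fun x => x / l) '' C ∪ (fun x => x / l + (l - 1) / l) '' C

/-!
`C_λ ⊆ [0, 1]`, and `C_λ` misses the central gap `(1/λ, (λ-1)/λ)` of length `(λ-2)/λ`. Two points
of `C_λ` on opposite sides of that gap are at distance at most `1`, so the gap itself will do.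
Two points on the same side are sent by `x ↦ λx` or `x ↦ λx - (λ-1)` to points of `C_λ` at `λ`
times their distance, and a gap between the images pulls back to one between the points. Since
distances cannot exceed `1`, the opposite-sides case is reached after finitely many rescalings.
-/

def HasGap (σ : ℝ) (C : Set ℝ) (a b : ℝ) : Prop :=
  ∃ α β : ℝ, a ≤ α ∧ α < β ∧ β ≤ b ∧ Ioo α β ∩ C = ∅ ∧ σ * (b - a) ≤ β - α

theorem HasGap.of_affine {σ r c a b : ℝ} {C : Set ℝ} (hr : 0 < r)
    (hmaps : ∀ x ∈ C, a ≤ x → x ≤ b → r * x - c ∈ C)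
    (h : HasGap σ C (r * a - c) (r * b - c)) : HasGap σ C a b := by
  obtain ⟨α, β, hα, hαβ, hβ, hgap, hlen⟩ := h
  refine ⟨(α + c) / r, (β + c) / r, ?_, ?_, ?_, ?_, ?_⟩
  · rw [le_div_iff₀ hr]; linarith
  · gcongr
  · rw [div_le_iff₀ hr]; linarith
  · refine eq_empty_of_forall_notMem fun x ⟨⟨hx₁, hx₂⟩, hxC⟩ => ?_
    rw [div_lt_iff₀ hr] at hx₁
    rw [lt_div_iff₀ hr] at hx₂
    have hax : a ≤ x := le_of_mul_le_mul_left (by linarith) hr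
    have hxb : x ≤ b := le_of_mul_le_mul_left (by linarith) hr
    have hmem : r * x - c ∈ Ioo α β ∩ C := ⟨⟨by linarith, by linarith⟩, hmaps x hxC hax hxb⟩
    rwa [hgap] at hmem
  · rw [← sub_div, le_div_iff₀ hr]
    linarith [show σ * (r * b - c - (r * a - c)) = σ * (b - a) * r by ring]

namespace IsCentralCantor

variable {l : ℝ} {C : Set ℝ}

theorem mem_iff (hl : l ≠ 0) (hC : IsCentralCantor l C) {x : ℝ} :
    x ∈ C ↔ l * x ∈ C ∨ l * x - (l - 1) ∈ C := by
  have h₀ (y : ℝ) : y / l = x ↔ y = l * x := by rw [div_eq_iff hl, mul_comm]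
  have h₁ (y : ℝ) : y / l + (l - 1) / l = x ↔ y = l * x - (l - 1) := by
    rw [← add_div, div_eq_iff hl, eq_sub_iff_add_eq, mul_comm]
  conv_lhs => rw [hC.2.2]
  simp only [mem_union, mem_image, h₀, h₁, exists_eq_right]

theorem subset_Icc (hl : 1 < l) (hC : IsCentralCantor l C) : C ⊆ Icc 0 1 := by
  have hmem {x : ℝ} := hC.mem_iff (x := x) (by positivity)
  obtain ⟨hcomp, hne, -⟩ := hC
  intro x hx
  constructor
  · refine le_trans ?_ (csInf_le hcomp.bddBelow hx)
    rcases hmem.mp (hcomp.sInf_mem hne) with h | h <;>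
      nlinarith [csInf_le hcomp.bddBelow h]
  · refine le_trans (le_csSup hcomp.bddAbove hx) ?_
    rcases hmem.mp (hcomp.sSup_mem hne) with h | h <;>
      nlinarith [le_csSup hcomp.bddAbove h]

theorem mul_mem_of_lt (hl : 1 < l) (hC : IsCentralCantor l C) {x : ℝ} (hx : x ∈ C)
    (hlt : x < (l - 1) / l) : l * x ∈ C := by
  refine ((hC.mem_iff (by positivity)).mp hx).resolve_right fun h => ?_
  rw [lt_div_iff₀ (by positivity)] at hlt
  linarith [(hC.subset_Icc hl h).1]

theorem mul_sub_mem_of_lt (hl : 1 < l) (hC : IsCentralCantor l C) {x : ℝ} (hx : x ∈ C)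
    (hlt : 1 / l < x) : l * x - (l - 1) ∈ C := by
  refine ((hC.mem_iff (by positivity)).mp hx).resolve_left fun h => ?_
  rw [div_lt_iff₀ (by positivity)] at hlt
  linarith [(hC.subset_Icc hl h).2]

theorem Ioo_inter_eq_empty (hl : 1 < l) (hC : IsCentralCantor l C) :
    Ioo (1 / l) ((l - 1) / l) ∩ C = ∅ := by
  refine eq_empty_of_forall_notMem fun x ⟨⟨hx₁, hx₂⟩, hxC⟩ => ?_
  have hlx := (hC.subset_Icc hl (hC.mul_mem_of_lt hl hxC hx₂)).2
  rw [div_lt_iff₀ (by positivity)] at hx₁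
  linarith

theorem hasGap_of_le_of_le (hl : 2 < l) (hC : IsCentralCantor l C) {a b : ℝ} (ha : a ∈ C)
    (hb : b ∈ C) (ha' : a ≤ 1 / l) (hb' : (l - 1) / l ≤ b) : HasGap ((l - 2) / l) C a b := by
  have hl0 : 0 < l := by linarith
  have hCI := hC.subset_Icc (by linarith)
  have hba : b - a ≤ 1 := by linarith [(hCI ha).1, (hCI hb).2]
  refine ⟨1 / l, (l - 1) / l, ha', by gcongr; linarith, hb', hC.Ioo_inter_eq_empty (by linarith),
    ?_⟩
  calc (l - 2) / l * (b - a) ≤ (l - 2) / l * 1 := by gcongr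
    _ = (l - 1) / l - 1 / l := by ring

theorem hasGap_of_one_le_pow_mul (hl : 2 < l) (hC : IsCentralCantor l C) (n : ℕ) {a b : ℝ}
    (ha : a ∈ C) (hb : b ∈ C) (hab : a < b) (hn : 1 ≤ l ^ n * (b - a)) :
    HasGap ((l - 2) / l) C a b := by
  have hl0 : 0 < l := by linarith
  have hl1 : 1 < l := by linarith
  have hCI := hC.subset_Icc hl1
  induction n generalizing a b with
  | zero =>
    have ha₀ : a ≤ 0 := by linarith [(hCI hb).2]
    have hb₁ : 1 ≤ b := by linarith [(hCI ha).1]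
    refine hC.hasGap_of_le_of_le hl ha hb (ha₀.trans (by positivity)) (le_trans ?_ hb₁)
    rw [div_le_one hl0]; linarith
  | succ n ih =>
    by_cases hmid : a ≤ 1 / l ∧ (l - 1) / l ≤ b
    · exact hC.hasGap_of_le_of_le hl ha hb hmid.1 hmid.2
    have hn' (c : ℝ) : 1 ≤ l ^ n * (l * b - c - (l * a - c)) := by
      convert hn using 1; ring
    have hlab (c : ℝ) : l * a - c < l * b - c := by gcongr
    rcases not_and_or.mp hmid with ha' | hb'
    · have hmaps : ∀ x ∈ C, a ≤ x → x ≤ b → l * x - (l - 1) ∈ C := fun x hx hax _ =>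
        hC.mul_sub_mem_of_lt hl1 hx (by linarith)
      exact .of_affine hl0 hmaps <|
        ih (hmaps a ha le_rfl hab.le) (hmaps b hb hab.le le_rfl) (hlab _) (hn' _)
    · have hmaps : ∀ x ∈ C, a ≤ x → x ≤ b → l * x - 0 ∈ C := fun x hx _ hxb => by
        simpa using hC.mul_mem_of_lt hl1 hx (by linarith)
      exact .of_affine hl0 hmaps <|
        ih (hmaps a ha le_rfl hab.le) (hmaps b hb hab.le le_rfl) (hlab _) (hn' _)

end IsCentralCantor

/-- For λ > 2 the central Cantor set `C_λ` is `(λ-2)/λ`-sparse. -/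
theorem centralCantor_sparse (l : ℝ) (hl : 2 < l) (C : Set ℝ)
    (hC : IsCentralCantor l C) :
    SparseSet ((l - 2) / l) C := by
  intro a ha b hb hab
  obtain ⟨n, hn⟩ := pow_unbounded_of_one_lt (1 / (b - a)) (by linarith : (1 : ℝ) < l)
  rw [div_lt_iff₀ (sub_pos.mpr hab)] at hn
  exact hC.hasGap_of_one_le_pow_mul hl n ha hb hab hn.le
end
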